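/- arXiv:1605.08830 — 7 statements merged into one kernel-verified Lean document; each statement's English description precedes it below -/
import Mathlib

section
/- Let W be the C(x)-subspace of C[[x]][x^{-1}] spanned by σ_1^m σ_2^r(f) for 0 ≤ m < m_1, 0 ≤ r < m_2, where f satisfies the two Mahler equations S_1(f)=0 and S_2(f)=0 with b_{1,0}, b_{2,0} ≠ 0. Then W is invariant under both σ_1 and σ_2, and moreover σ_1 and σ_2 restrict to injective C(x)-semilinear maps on W. -/
open scoped RatFunc

open HahnSeries Submodule Finset

/-! The Mahler operators are ring endomorphisms of `ℂ((x))` (they re-index exponents by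
`k ↦ p k`), hence injective, semilinear over `τ` and mutually commuting. The equation
`S₁ f = 0` writes `σ₁^{m₁} f` as a `ℂ(x)`-combination of the `σ₁^i f`, `i < m₁`; applying
`σ₂^r`, which commutes with `σ₁` and twists the coefficients by `τ₂^r`, puts
`σ₁^{m₁} σ₂^r f` in `W`. So the semilinear map `σ₁` sends the generators of `W`, hence all
of `W`, into `W`; symmetrically for `σ₂`. -/

section Mahler

variable {R : Type*} [Semiring R] (p q : ℕ) (hp : 0 < p) (hq : 0 < q)

/-- `g(x) ↦ g(x ^ p)`. -/
noncomputable def mahlerHom : LaurentSeries R →+* LaurentSeries R :=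
  embDomainRingHom (AddMonoidHom.mulLeft (p : ℤ))
    (mul_right_injective₀ (by exact_mod_cast hp.ne'))
    (fun _ _ => mul_le_mul_iff_right₀ (by exact_mod_cast hp))

variable {p q hp hq}

theorem mahlerHom_coeff_mul (g : LaurentSeries R) (k : ℤ) :
    (mahlerHom p hp g).coeff (p * k) = g.coeff k :=
  embDomain_coeff (a := k)

theorem mahlerHom_coeff_of_not_dvd (g : LaurentSeries R) {k : ℤ} (hk : ¬(p : ℤ) ∣ k) :
    (mahlerHom p hp g).coeff k = 0 :=
  embDomain_of_notMem_range fun ⟨c, hc⟩ => hk ⟨c, hc.symm⟩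

theorem mahlerHom_coeff (g : LaurentSeries R) (k : ℤ) :
    (mahlerHom p hp g).coeff k = if (p : ℤ) ∣ k then g.coeff (k / p) else 0 := by
  split_ifs with hk
  · obtain ⟨c, rfl⟩ := hk
    rw [mahlerHom_coeff_mul, Int.mul_ediv_cancel_left _ (by exact_mod_cast hp.ne')]
  · exact mahlerHom_coeff_of_not_dvd g hk

variable (hp) in
theorem eq_mahlerHom {σ : LaurentSeries R → LaurentSeries R}
    (hσ : ∀ g k, (σ g).coeff k = if (p : ℤ) ∣ k then g.coeff (k / p) else 0) :
    σ = mahlerHom p hp := by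
  funext g
  ext k
  rw [hσ, mahlerHom_coeff]

theorem mahlerHom_injective : Function.Injective (mahlerHom (R := R) p hp) :=
  embDomain_injective

theorem mahlerHom_mahlerHom (g : LaurentSeries R) :
    mahlerHom p hp (mahlerHom q hq g) = mahlerHom (p * q) (mul_pos hp hq) g := by
  ext k
  by_cases hk : ((p * q : ℕ) : ℤ) ∣ k
  · obtain ⟨c, rfl⟩ := hk
    rw [mahlerHom_coeff_mul, Nat.cast_mul, mul_assoc, mahlerHom_coeff_mul, mahlerHom_coeff_mul]
  · rw [mahlerHom_coeff_of_not_dvd g hk]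
    by_cases hpk : (p : ℤ) ∣ k
    · obtain ⟨a, rfl⟩ := hpk
      refine (mahlerHom_coeff_mul _ a).trans (mahlerHom_coeff_of_not_dvd g fun ⟨c, hc⟩ => ?_)
      exact hk ⟨c, by rw [hc]; push_cast; ring⟩
    · exact mahlerHom_coeff_of_not_dvd _ hpk

variable (hp hq) in
theorem mahlerHom_commute :
    Function.Commute (mahlerHom (R := R) p hp) (mahlerHom q hq) := fun g => by
  rw [mahlerHom_mahlerHom, mahlerHom_mahlerHom]
  congr 2
  exact mul_comm p q

end Mahler

section IterateSpan

variable (K : Type*) {A : Type*} [CommRing K] [Ring A] [Algebra K A]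

def iterateSpan (σ ρ : A → A) (m n : ℕ) (f : A) : Submodule K A :=
  span K {w | ∃ i j : ℕ, i < m ∧ j < n ∧ w = σ^[i] (ρ^[j] f)}

variable {K} {σ ρ : A →+* A} {τ τ' : K →+* K}

theorem iterateSpan_comm {σ ρ : A → A} (h : Function.Commute σ ρ) (m n : ℕ) (f : A) :
    iterateSpan K σ ρ m n f = iterateSpan K ρ σ n m f := by
  unfold iterateSpan
  congr 1
  ext w
  constructor <;> rintro ⟨i, j, hi, hj, rfl⟩
  · exact ⟨j, i, hj, hi, h.iterate_iterate i j f⟩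
  · exact ⟨j, i, hj, hi, (h.iterate_iterate j i f).symm⟩

theorem algebraMap_iterate (hτ : ∀ c, algebraMap K A (τ c) = σ (algebraMap K A c))
    (n : ℕ) (c : K) : algebraMap K A (τ^[n] c) = σ^[n] (algebraMap K A c) := by
  induction n with
  | zero => rfl
  | succ n ih => rw [Function.iterate_succ_apply', Function.iterate_succ_apply', hτ, ih]

theorem map_mem_span_of_forall_mem (hτ : ∀ c, algebraMap K A (τ c) = σ (algebraMap K A c))
    {s : Set A} (hs : ∀ x ∈ s, σ x ∈ span K s) {w : A} (hw : w ∈ span K s) :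
    σ w ∈ span K s := by
  induction hw using span_induction with
  | mem x hx => exact hs x hx
  | zero => simp
  | add x y _ _ hx hy => simpa using add_mem hx hy
  | smul c x _ hx => simpa [Algebra.smul_def, ← hτ] using smul_mem _ (τ c) hx

variable {m n : ℕ} {b : ℕ → K} {f : A}

theorem iterate_iterate_mem_iterateSpan (hτ' : ∀ c, algebraMap K A (τ' c) = ρ (algebraMap K A c))
    (hσρ : Function.Commute σ ρ)
    (hf : σ^[m] f + ∑ i ∈ range m, algebraMap K A (b i) * σ^[i] f = 0)
    {i j : ℕ} (hi : i ≤ m) (hj : j < n) :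
    σ^[i] (ρ^[j] f) ∈ iterateSpan K σ ρ m n f := by
  rcases hi.lt_or_eq with hi | rfl
  · exact subset_span ⟨i, j, hi, hj, rfl⟩
  -- `i = m`: rewrite `σ^m f` by the recurrence and push `ρ^j` through it.
  rw [(hσρ.iterate_iterate i j).eq, eq_neg_of_add_eq_zero_left hf, ← RingHom.coe_pow, map_neg,
    map_sum]
  refine neg_mem (sum_mem fun k hk => ?_)
  rw [map_mul, RingHom.coe_pow, ← algebraMap_iterate hτ', ← Algebra.smul_def,
    ← (hσρ.iterate_iterate k j).eq]
  exact smul_mem _ _ (subset_span ⟨k, j, mem_range.mp hk, hj, rfl⟩)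

theorem map_mem_iterateSpan (hτ : ∀ c, algebraMap K A (τ c) = σ (algebraMap K A c))
    (hτ' : ∀ c, algebraMap K A (τ' c) = ρ (algebraMap K A c)) (hσρ : Function.Commute σ ρ)
    (hf : σ^[m] f + ∑ i ∈ range m, algebraMap K A (b i) * σ^[i] f = 0)
    {w : A} (hw : w ∈ iterateSpan K σ ρ m n f) : σ w ∈ iterateSpan K σ ρ m n f := by
  refine map_mem_span_of_forall_mem hτ ?_ hw
  rintro _ ⟨i, j, hi, hj, rfl⟩
  rw [← Function.iterate_succ_apply' σ]
  exact iterate_iterate_mem_iterateSpan hτ' hσρ hf hi hj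

end IterateSpan

theorem stmt3_general (p q : ℕ) (hp : 0 < p) (hq : 0 < q)
    (σ₁ σ₂ : LaurentSeries ℂ → LaurentSeries ℂ)
    (hσ₁ : ∀ (f : LaurentSeries ℂ) (k : ℤ),
      (σ₁ f).coeff k = if (p : ℤ) ∣ k then f.coeff (k / (p : ℤ)) else 0)
    (hσ₂ : ∀ (f : LaurentSeries ℂ) (k : ℤ),
      (σ₂ f).coeff k = if (q : ℤ) ∣ k then f.coeff (k / (q : ℤ)) else 0)
    (τ₁ τ₂ : RatFunc ℂ →+* RatFunc ℂ)
    (hτ₁ : ∀ r : RatFunc ℂ, ((τ₁ r : RatFunc ℂ) : LaurentSeries ℂ) = σ₁ (r : LaurentSeries ℂ))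
    (hτ₂ : ∀ r : RatFunc ℂ, ((τ₂ r : RatFunc ℂ) : LaurentSeries ℂ) = σ₂ (r : LaurentSeries ℂ))
    (m₁ m₂ : ℕ)
    (b₁ : ℕ → RatFunc ℂ) (b₂ : ℕ → RatFunc ℂ)
    (f : LaurentSeries ℂ)
    (heq₁ : σ₁^[m₁] f + ∑ i ∈ Finset.range m₁, (b₁ i : LaurentSeries ℂ) * σ₁^[i] f = 0)
    (heq₂ : σ₂^[m₂] f + ∑ i ∈ Finset.range m₂, (b₂ i : LaurentSeries ℂ) * σ₂^[i] f = 0)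
    (W : Submodule (RatFunc ℂ) (LaurentSeries ℂ))
    (hW : W = Submodule.span (RatFunc ℂ)
      {w | ∃ m r : ℕ, m < m₁ ∧ r < m₂ ∧ w = σ₁^[m] (σ₂^[r] f)}) :
    (∀ w ∈ W, σ₁ w ∈ W) ∧ (∀ w ∈ W, σ₂ w ∈ W) ∧
    (∀ (c : RatFunc ℂ) (w : LaurentSeries ℂ), w ∈ W →
        σ₁ ((c : LaurentSeries ℂ) * w) = (τ₁ c : LaurentSeries ℂ) * σ₁ w) ∧
    (∀ (c : RatFunc ℂ) (w : LaurentSeries ℂ), w ∈ W →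
        σ₂ ((c : LaurentSeries ℂ) * w) = (τ₂ c : LaurentSeries ℂ) * σ₂ w) ∧
    (∀ w ∈ W, ∀ w' ∈ W, σ₁ w = σ₁ w' → w = w') ∧
    (∀ w ∈ W, ∀ w' ∈ W, σ₂ w = σ₂ w' → w = w') := by
  obtain rfl := eq_mahlerHom hp hσ₁
  obtain rfl := eq_mahlerHom hq hσ₂
  have hcomm := mahlerHom_commute (R := ℂ) hp hq
  have hW₂ : W = iterateSpan (RatFunc ℂ) (mahlerHom q hq) (mahlerHom p hp) m₂ m₁ f :=
    hW.trans (iterateSpan_comm hcomm m₁ m₂ f)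
  refine ⟨?_, ?_, fun c w _ => by rw [map_mul, hτ₁], fun c w _ => by rw [map_mul, hτ₂],
    fun w _ w' _ h => mahlerHom_injective h, fun w _ w' _ h => mahlerHom_injective h⟩
  · subst hW
    exact fun w => map_mem_iterateSpan hτ₁ hτ₂ hcomm heq₁
  · subst hW₂
    exact fun w => map_mem_iterateSpan hτ₂ hτ₁ hcomm.symm heq₂

/-- Let `f` satisfy the two Mahler equations `S₁(f) = 0`, `S₂(f) = 0` with
`b_{1,0}, b_{2,0} ≠ 0`, and let `W` be the `ℂ(x)`-subspace of `ℂ[[x]][x⁻¹]` spanned by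
`σ₁^m σ₂^r f` for `0 ≤ m < m₁`, `0 ≤ r < m₂`.  Then `W` is invariant under `σ₁` and `σ₂`,
and `σ₁, σ₂` restrict to injective `ℂ(x)`-semilinear maps on `W` (semilinear with respect
to the endomorphisms `τ₁, τ₂` of `ℂ(x)` induced by `σ₁, σ₂`). -/
theorem stmt3 (p q : ℕ) (hp : 0 < p) (hq : 0 < q)
    (σ₁ σ₂ : LaurentSeries ℂ → LaurentSeries ℂ)
    (hσ₁ : ∀ (f : LaurentSeries ℂ) (k : ℤ),
      (σ₁ f).coeff k = if (p : ℤ) ∣ k then f.coeff (k / (p : ℤ)) else 0)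
    (hσ₂ : ∀ (f : LaurentSeries ℂ) (k : ℤ),
      (σ₂ f).coeff k = if (q : ℤ) ∣ k then f.coeff (k / (q : ℤ)) else 0)
    (τ₁ τ₂ : RatFunc ℂ →+* RatFunc ℂ)
    (hτ₁ : ∀ r : RatFunc ℂ, ((τ₁ r : RatFunc ℂ) : LaurentSeries ℂ) = σ₁ (r : LaurentSeries ℂ))
    (hτ₂ : ∀ r : RatFunc ℂ, ((τ₂ r : RatFunc ℂ) : LaurentSeries ℂ) = σ₂ (r : LaurentSeries ℂ))
    (m₁ m₂ : ℕ) (hm₁ : 0 < m₁) (hm₂ : 0 < m₂)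
    (b₁ : ℕ → RatFunc ℂ) (b₂ : ℕ → RatFunc ℂ)
    (hb₁ : b₁ 0 ≠ 0) (hb₂ : b₂ 0 ≠ 0)
    (f : LaurentSeries ℂ)
    (heq₁ : σ₁^[m₁] f + ∑ i ∈ Finset.range m₁, (b₁ i : LaurentSeries ℂ) * σ₁^[i] f = 0)
    (heq₂ : σ₂^[m₂] f + ∑ i ∈ Finset.range m₂, (b₂ i : LaurentSeries ℂ) * σ₂^[i] f = 0)
    (W : Submodule (RatFunc ℂ) (LaurentSeries ℂ))
    (hW : W = Submodule.span (RatFunc ℂ)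
      {w | ∃ m r : ℕ, m < m₁ ∧ r < m₂ ∧ w = σ₁^[m] (σ₂^[r] f)}) :
    (∀ w ∈ W, σ₁ w ∈ W) ∧ (∀ w ∈ W, σ₂ w ∈ W) ∧
    (∀ (c : RatFunc ℂ) (w : LaurentSeries ℂ), w ∈ W →
        σ₁ ((c : LaurentSeries ℂ) * w) = (τ₁ c : LaurentSeries ℂ) * σ₁ w) ∧
    (∀ (c : RatFunc ℂ) (w : LaurentSeries ℂ), w ∈ W →
        σ₂ ((c : LaurentSeries ℂ) * w) = (τ₂ c : LaurentSeries ℂ) * σ₂ w) ∧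
    (∀ w ∈ W, ∀ w' ∈ W, σ₁ w = σ₁ w' → w = w') ∧
    (∀ w ∈ W, ∀ w' ∈ W, σ₂ w = σ₂ w' → w = w') :=
  stmt3_general p q hp hq σ₁ σ₂ hσ₁ hσ₂ τ₁ τ₂ hτ₁ hτ₂ m₁ m₂ b₁ b₂ f heq₁ heq₂ W hW
end

section
/- Let p ≥ 2 be an integer, A(x) ∈ GL_n(C(x)), and suppose g(x) ∈ (C[[x]][x^{-1}])^n is a formal Laurent series vector satisfying g(x^p) = A(x) g(x). Then g(x) converges in some punctured neighborhood of 0. -/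
/-!
Inverting `A` turns the equation into `g = B(x) g(x^p)` with `B = A⁻¹`, whose entries are rational
functions and hence have geometrically bounded Laurent coefficients. Multiplying by a common
power of `x` turns this into a system `x^a h = β(x) h(x^p)` of power series. The coefficient of
`x^t` in `h` is then a convolution of coefficients of `β` with coefficients of `h` of index at most
`(t + a) / p < t`, so strong induction gives `‖h_t‖ ≤ C ρ^(p t)`: the polynomial factor `t + a + 1`
lost in the convolution is absorbed because `p t` outgrows `t`.
-/

open Finset PowerSeries Filter
open scoped LaurentSeries RatFunc Matrix

namespace PowerSeries

variable {R : Type*}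

/-- Equivalently, `φ` has a positive radius of convergence. -/
def IsGeomBounded [Semiring R] [Norm R] (φ : R⟦X⟧) : Prop :=
  ∃ C r : ℝ, 0 < C ∧ 1 ≤ r ∧ ∀ n, ‖coeff n φ‖ ≤ C * r ^ n

section NormedRing

variable [NormedRing R]

theorem norm_coeff_mul_le {φ ψ : R⟦X⟧} {n : ℕ} {C₁ C₂ r : ℝ}
    (hφ : ∀ i ≤ n, ‖coeff i φ‖ ≤ C₁ * r ^ i) (hψ : ∀ j ≤ n, ‖coeff j ψ‖ ≤ C₂ * r ^ j) :
    ‖coeff n (φ * ψ)‖ ≤ (n + 1) * (C₁ * C₂ * r ^ n) := by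
  rw [coeff_mul]
  refine (norm_sum_le_of_le _ fun x hx => ?_).trans_eq (by
    rw [sum_const, Nat.card_antidiagonal, nsmul_eq_mul]; push_cast; rfl)
  rw [HasAntidiagonal.mem_antidiagonal] at hx
  have h₁ := hφ x.1 (by omega)
  calc ‖coeff x.1 φ * coeff x.2 ψ‖ ≤ ‖coeff x.1 φ‖ * ‖coeff x.2 ψ‖ := norm_mul_le _ _
    _ ≤ C₁ * r ^ x.1 * (C₂ * r ^ x.2) :=
      mul_le_mul h₁ (hψ x.2 (by omega)) (norm_nonneg _) ((norm_nonneg _).trans h₁)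
    _ = C₁ * C₂ * r ^ n := by rw [← hx, pow_add]; ring

theorem IsGeomBounded.mul {φ ψ : R⟦X⟧} (hφ : φ.IsGeomBounded) (hψ : ψ.IsGeomBounded) :
    (φ * ψ).IsGeomBounded := by
  obtain ⟨C₁, r₁, hC₁, hr₁, h₁⟩ := hφ
  obtain ⟨C₂, r₂, hC₂, hr₂, h₂⟩ := hψ
  set r := max r₁ r₂
  have hr : 1 ≤ r := hr₁.trans (le_max_left _ _)
  refine ⟨C₁ * C₂, 2 * r, by positivity, by linarith, fun n => ?_⟩
  calc ‖coeff n (φ * ψ)‖ ≤ (n + 1) * (C₁ * C₂ * r ^ n) :=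
        norm_coeff_mul_le (fun i _ => (h₁ i).trans (by gcongr; exact le_max_left _ _))
          (fun j _ => (h₂ j).trans (by gcongr; exact le_max_right _ _))
    _ ≤ 2 ^ n * (C₁ * C₂ * r ^ n) := by gcongr; exact_mod_cast Nat.lt_two_pow_self
    _ = C₁ * C₂ * (2 * r) ^ n := by ring

theorem exists_bound_of_forall_isGeomBounded {ι : Type*} [Fintype ι] {φ : ι → R⟦X⟧}
    (hφ : ∀ i, (φ i).IsGeomBounded) :
    ∃ C r : ℝ, 0 < C ∧ 1 ≤ r ∧ ∀ i n, ‖coeff n (φ i)‖ ≤ C * r ^ n := by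
  choose C r hC hr hb using hφ
  have hCs : ∀ i, C i ≤ ∑ j, C j := fun i => single_le_sum (fun j _ => (hC j).le) (mem_univ i)
  have hrs : ∀ i, r i ≤ ∑ j, r j := fun i =>
    single_le_sum (fun j _ => zero_le_one.trans (hr j)) (mem_univ i)
  have hCs0 : 0 ≤ ∑ j, C j := sum_nonneg fun j _ => (hC j).le
  have hrs0 : 0 ≤ ∑ j, r j := sum_nonneg fun j _ => zero_le_one.trans (hr j)
  refine ⟨1 + ∑ j, C j, 1 + ∑ j, r j, by positivity, by linarith, fun i n => (hb i n).trans ?_⟩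
  exact mul_le_mul (by linarith [hCs i])
    (pow_le_pow_left₀ (by linarith [hr i]) (by linarith [hrs i]) n)
    (pow_nonneg (by linarith [hr i]) n) (by positivity)

end NormedRing

end PowerSeries

namespace Polynomial

theorem sum_norm_coeff_le {R : Type*} [NormedRing R] (q : R[X]) (s : Finset ℕ) :
    ∑ k ∈ s, ‖q.coeff k‖ ≤ ∑ k ∈ q.support, ‖q.coeff k‖ := by
  rw [← sum_filter_of_ne (p := (· ∈ q.support))
    fun k _ hk => mem_support_iff.2 (norm_ne_zero_iff.1 hk)]
  exact sum_le_sum_of_subset_of_nonneg (fun k hk => (mem_filter.1 hk).2)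
    fun _ _ _ => norm_nonneg _

theorem isGeomBounded_coe {R : Type*} [NormedRing R] (q : R[X]) : (q : R⟦X⟧).IsGeomBounded := by
  refine ⟨1 + ∑ k ∈ q.support, ‖q.coeff k‖, 1, by positivity, le_rfl, fun n => ?_⟩
  rw [coeff_coe, one_pow, mul_one]
  linarith [q.sum_norm_coeff_le {n}, sum_singleton (fun k => ‖q.coeff k‖) n]

theorem isGeomBounded_inv_coe {𝕜 : Type*} [NormedField 𝕜] (q : 𝕜[X]) (hq : q.coeff 0 ≠ 0) :
    ((q : 𝕜⟦X⟧)⁻¹).IsGeomBounded := by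
  set c := ‖(q.coeff 0)⁻¹‖
  set S := ∑ k ∈ q.support, ‖q.coeff k‖
  have hc : 0 < c := norm_pos_iff.2 (inv_ne_zero hq)
  have hS : 0 ≤ S := sum_nonneg fun _ _ => norm_nonneg _
  set R := 1 + c * S
  have hR : 1 ≤ R := le_add_of_nonneg_right (by positivity)
  refine ⟨c, R, hc, hR, fun m => ?_⟩
  induction m using Nat.strong_induction_on with
  | _ m ih =>
  rw [PowerSeries.coeff_inv, constantCoeff_coe]
  split_ifs with hm
  · simp [hm, c]
  rw [norm_mul, norm_neg]
  gcongr
  have hterm : ∀ x ∈ antidiagonal m,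
      ‖if x.2 < m then PowerSeries.coeff x.1 (q : 𝕜⟦X⟧) * PowerSeries.coeff x.2 (q : 𝕜⟦X⟧)⁻¹
        else 0‖ ≤ ‖q.coeff x.1‖ * (c * R ^ (m - 1)) := by
    rintro x -
    split_ifs with hx
    · rw [norm_mul, coeff_coe]
      gcongr
      exact (ih x.2 hx).trans (by gcongr; omega)
    · rw [norm_zero]; positivity
  calc _ ≤ ∑ x ∈ antidiagonal m, ‖q.coeff x.1‖ * (c * R ^ (m - 1)) := norm_sum_le_of_le _ hterm
    _ ≤ S * (c * R ^ (m - 1)) := by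
        rw [← sum_mul, Nat.sum_antidiagonal_eq_sum_range_succ_mk]
        gcongr
        exact q.sum_norm_coeff_le _
    _ ≤ R * R ^ (m - 1) := by
        rw [← mul_assoc, mul_comm S]
        gcongr
        linarith
    _ = R ^ m := by rw [← pow_succ', Nat.sub_add_cancel (Nat.one_le_iff_ne_zero.2 hm)]

end Polynomial

theorem eventually_mul_pow_le_pow_mul (K : ℝ) {R : ℝ} (hR : 4 ≤ R) {p : ℕ} (hp : 2 ≤ p) :
    ∀ᶠ t : ℕ in atTop, K * (t + 1) * R ^ t ≤ R ^ (p * t) := by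
  obtain ⟨t₀, ht₀⟩ := pow_unbounded_of_one_lt K one_lt_two
  filter_upwards [eventually_ge_atTop t₀] with t ht
  have hK : K ≤ 2 ^ t := ht₀.le.trans (pow_le_pow_right₀ one_le_two ht)
  calc K * (t + 1) * R ^ t ≤ 2 ^ t * 2 ^ t * R ^ t := by
        gcongr
        exact_mod_cast Nat.lt_two_pow_self
    _ = 4 ^ t * R ^ t := by rw [← mul_pow]; norm_num
    _ ≤ R ^ t * R ^ t := by gcongr
    _ = R ^ (2 * t) := by rw [two_mul, pow_add]
    _ ≤ R ^ (p * t) := pow_le_pow_right₀ (by linarith) (by gcongr)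

namespace PowerSeries

theorem isGeomBounded_X_pow {R : Type*} [NormedRing R] (d : ℕ) :
    (X ^ d : R⟦X⟧).IsGeomBounded := by
  simpa using Polynomial.isGeomBounded_coe (Polynomial.X ^ d : Polynomial R)

theorem isGeomBounded_of_X_pow_mul_eq_sum_mul_expand {R ι : Type*} [NormedCommRing R]
    [Fintype ι] {p : ℕ} (hp : 2 ≤ p) (a : ℕ) {β : ι → ι → R⟦X⟧}
    (hβ : ∀ i j, (β i j).IsGeomBounded) {h : ι → R⟦X⟧}
    (heq : ∀ i, X ^ a * h i = ∑ j, β i j * expand p (by omega) (h j)) (i : ι) :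
    (h i).IsGeomBounded := by
  obtain ⟨M, ρ, hM, hρ, hβM⟩ :=
    exists_bound_of_forall_isGeomBounded fun ij : ι × ι => hβ ij.1 ij.2
  set ρ' := max ρ 4
  have hρ' : 4 ≤ ρ' := le_max_right _ _
  have hβρ' : ∀ i j u, ‖coeff u (β i j)‖ ≤ M * ρ' ^ u := fun i j u =>
    (hβM (i, j) u).trans (by gcongr; exact le_max_left _ _)
  obtain ⟨t₀, ht₀⟩ := eventually_atTop.1 <|
    eventually_mul_pow_le_pow_mul (Fintype.card ι * M * (a + 1) * ρ' ^ a) hρ' hp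
  set T := max t₀ (a + 1)
  set C := 1 + ∑ x : Fin T × ι, ‖coeff x.1 (h x.2)‖
  have hC : 1 ≤ C := le_add_of_nonneg_right (sum_nonneg fun _ _ => norm_nonneg _)
  suffices key : ∀ t j, ‖coeff t (h j)‖ ≤ C * (ρ' ^ p) ^ t from
    ⟨C, ρ' ^ p, by linarith, one_le_pow₀ (by linarith), fun t => key t i⟩
  intro t
  induction t using Nat.strong_induction_on with
  | _ t ih =>
  intro j
  rcases lt_or_ge t T with ht | ht
  · calc ‖coeff t (h j)‖ ≤ C := by
          linarith [single_le_sum (f := fun x : Fin T × ι => ‖coeff x.1 (h x.2)‖)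
            (fun _ _ => norm_nonneg _) (mem_univ (⟨t, ht⟩, j))]
      _ ≤ C * (ρ' ^ p) ^ t :=
          le_mul_of_one_le_right (by linarith) (one_le_pow₀ (one_le_pow₀ (by linarith)))
  have hexpand : ∀ k v, v ≤ t + a → ‖coeff v (expand p (by omega) (h k))‖ ≤ C * ρ' ^ v := by
    intro k v hv
    rw [coeff_expand]
    split_ifs with hdvd
    · obtain ⟨s, rfl⟩ := hdvd
      have hs : s < t := by
        have : 2 * s ≤ p * s := Nat.mul_le_mul_right s hp
        omega
      rw [Nat.mul_div_cancel_left s (by omega), pow_mul]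
      exact ih s hs k
    · rw [norm_zero]; positivity
  calc ‖coeff t (h j)‖ = ‖∑ k, coeff (t + a) (β j k * expand p (by omega) (h k))‖ := by
        rw [← map_sum, ← heq, coeff_X_pow_mul', if_pos (by omega), Nat.add_sub_cancel]
    _ ≤ ∑ k : ι, (((t + a : ℕ) : ℝ) + 1) * (M * C * ρ' ^ (t + a)) :=
        norm_sum_le_of_le _ fun k _ => norm_coeff_mul_le (fun u _ => hβρ' j k u) (hexpand k)
    _ = C * (Fintype.card ι * M * ((t + a : ℕ) + 1) * ρ' ^ a * ρ' ^ t) := by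
        rw [sum_const, card_univ, nsmul_eq_mul, pow_add]; ring
    _ ≤ C * (Fintype.card ι * M * ((a + 1) * (t + 1)) * ρ' ^ a * ρ' ^ t) := by
        gcongr
        push_cast
        nlinarith
    _ = C * (Fintype.card ι * M * (a + 1) * ρ' ^ a * (t + 1) * ρ' ^ t) := by ring
    _ ≤ C * ρ' ^ (p * t) := by gcongr; exact ht₀ t (le_trans (le_max_left _ _) ht)
    _ = C * (ρ' ^ p) ^ t := by rw [pow_mul]

end PowerSeries

namespace LaurentSeries

open HahnSeries (single single_mul_single)

section Semiring

variable {R : Type*} [Semiring R]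

theorem coeff_single_mul_coe (N : ℤ) (φ : R⟦X⟧) (k : ℤ) :
    (single N 1 * (φ : R⸨X⸩)).coeff k = if N ≤ k then coeff (k - N).toNat φ else 0 := by
  rw [HahnSeries.coeff_single_mul, one_mul, PowerSeries.coeff_coe]
  split_ifs <;> first | rfl | (exfalso; omega) | (congr 2; omega)

theorem single_mul_coe_eq_of_le {N' N : ℤ} (h : N' ≤ N) (φ : R⟦X⟧) :
    single N 1 * (φ : R⸨X⸩) = single N' 1 * ((X ^ (N - N').toNat * φ : R⟦X⟧) : R⸨X⸩) := by
  ext k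
  rw [coeff_single_mul_coe, coeff_single_mul_coe, coeff_X_pow_mul']
  split_ifs <;> first | rfl | (exfalso; omega) | (congr 2; omega)

theorem single_add_one_eq_mul (a b : ℤ) : single (a + b) (1 : R) = single a 1 * single b 1 := by
  rw [single_mul_single, one_mul]

theorem eventually_atBot_eq_single_mul_coe (f : R⸨X⸩) :
    ∀ᶠ N in atBot, ∃ φ : R⟦X⟧, f = single N 1 * (φ : R⸨X⸩) := by
  filter_upwards [eventually_le_atBot f.order] with N hN
  exact ⟨_, f.single_order_mul_powerSeriesPart.symm.trans (single_mul_coe_eq_of_le hN _)⟩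

end Semiring

def IsGeomBounded {R : Type*} [Semiring R] [Norm R] (f : R⸨X⸩) : Prop :=
  ∃ (N : ℤ) (φ : R⟦X⟧), φ.IsGeomBounded ∧ f = single N 1 * (φ : R⸨X⸩)

theorem isGeomBounded_coe {R : Type*} [NormedRing R] {φ : R⟦X⟧} (hφ : φ.IsGeomBounded) :
    IsGeomBounded (φ : R⸨X⸩) :=
  ⟨0, φ, hφ, by rw [HahnSeries.single_zero_one, one_mul]⟩

theorem IsGeomBounded.mul {R : Type*} [NormedCommRing R] {f g : R⸨X⸩} (hf : f.IsGeomBounded)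
    (hg : g.IsGeomBounded) : (f * g).IsGeomBounded := by
  obtain ⟨N₁, φ₁, hφ₁, rfl⟩ := hf
  obtain ⟨N₂, φ₂, hφ₂, rfl⟩ := hg
  refine ⟨N₁ + N₂, φ₁ * φ₂, hφ₁.mul hφ₂, ?_⟩
  rw [PowerSeries.coe_mul, single_add_one_eq_mul]
  ring

theorem IsGeomBounded.eventually_atBot {R : Type*} [NormedRing R] {f : R⸨X⸩}
    (hf : f.IsGeomBounded) :
    ∀ᶠ N in atBot, ∃ φ : R⟦X⟧, φ.IsGeomBounded ∧ f = single N 1 * (φ : R⸨X⸩) := by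
  obtain ⟨N₀, φ, hφ, rfl⟩ := hf
  filter_upwards [eventually_le_atBot N₀] with N hN
  exact ⟨_, (isGeomBounded_X_pow _).mul hφ, single_mul_coe_eq_of_le hN φ⟩

theorem inv_coe_X_pow_mul {K : Type*} [Field K] (a : ℕ) {φ : K⟦X⟧} (hφ : constantCoeff φ ≠ 0) :
    ((X ^ a * φ : K⟦X⟧) : K⸨X⸩)⁻¹ = single (-a : ℤ) 1 * ((φ⁻¹ : K⟦X⟧) : K⸨X⸩) := by
  have hinv : (φ : K⸨X⸩)⁻¹ = ((φ⁻¹ : K⟦X⟧) : K⸨X⸩) := inv_eq_of_mul_eq_one_right <| by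
    rw [← PowerSeries.coe_mul, PowerSeries.mul_inv_cancel _ hφ, PowerSeries.coe_one]
  rw [PowerSeries.coe_mul, HahnSeries.ofPowerSeries_X_pow, mul_inv, HahnSeries.inv_single,
    inv_one, hinv]

theorem eq_single_mul_coe_expand {R : Type*} [CommRing R] {p : ℕ} (hp : p ≠ 0) {N : ℤ}
    {φ : R⟦X⟧} {s : R⸨X⸩}
    (hs : ∀ k, s.coeff k = if (p : ℤ) ∣ k then (single N 1 * (φ : R⸨X⸩)).coeff (k / p) else 0) :
    s = single (p * N) 1 * (expand p hp φ : R⸨X⸩) := by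
  ext k
  rw [hs, coeff_single_mul_coe, coeff_single_mul_coe, coeff_expand]
  by_cases hk : (p : ℤ) ∣ k
  · obtain ⟨m, rfl⟩ := hk
    rw [if_pos (dvd_mul_right _ _), Int.mul_ediv_cancel_left _ (by exact_mod_cast hp)]
    by_cases hm : N ≤ m
    · obtain ⟨d, hd⟩ := Int.eq_ofNat_of_zero_le (sub_nonneg.2 hm)
      have hpd : (p : ℤ) * m - p * N = ((p * d : ℕ) : ℤ) := by push_cast; rw [← hd]; ring
      rw [if_pos hm, if_pos (by nlinarith), hpd, Int.toNat_natCast, hd, Int.toNat_natCast,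
        if_pos (dvd_mul_right _ _), Nat.mul_div_cancel_left _ (Nat.pos_of_ne_zero hp)]
    · rw [if_neg hm, if_neg fun h => hm (le_of_mul_le_mul_left h (by positivity))]
  · rw [if_neg hk, eq_comm]
    split_ifs with hpN hdvd
    · refine absurd ?_ hk
      have := dvd_add (Int.natCast_dvd_natCast.2 hdvd) (dvd_mul_right (p : ℤ) N)
      rwa [Int.toNat_of_nonneg (by omega), sub_add_cancel] at this
    all_goals rfl

theorem X_pow_mul_eq_sum_mul_of_eq_sum_mul {R ι : Type*} [CommRing R] [Fintype ι] {N M : ℤ}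
    (hM : M ≤ 0) {g s : ι → R⸨X⸩} {b : ι → ι → R⸨X⸩} {h ψ : ι → R⟦X⟧} {β : ι → ι → R⟦X⟧}
    (hg : ∀ i, g i = single N 1 * (h i : R⸨X⸩)) (hb : ∀ i j, b i j = single N 1 * (β i j : R⸨X⸩))
    (hs : ∀ j, s j = single M 1 * (ψ j : R⸨X⸩)) (heq : ∀ i, g i = ∑ j, b i j * s j) (i : ι) :
    X ^ (-M).toNat * h i = ∑ j, β i j * ψ j := by
  apply HahnSeries.ofPowerSeries_injective (Γ := ℤ)
  calc HahnSeries.ofPowerSeries ℤ R (X ^ (-M).toNat * h i)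
      = single (-(N + M)) 1 * (single N 1 * (h i : R⸨X⸩)) := by
        rw [map_mul, HahnSeries.ofPowerSeries_X_pow, ← mul_assoc, ← single_add_one_eq_mul,
          Int.toNat_of_nonneg (by omega), show -(N + M) + N = -M by ring]
    _ = single (-(N + M)) 1 *
          (single (N + M) 1 * HahnSeries.ofPowerSeries ℤ R (∑ j, β i j * ψ j)) := by
        congr 1
        rw [← hg, heq, map_sum, mul_sum]
        refine sum_congr rfl fun j _ => ?_
        rw [hb, hs, map_mul, single_add_one_eq_mul]
        ring
    _ = HahnSeries.ofPowerSeries ℤ R (∑ j, β i j * ψ j) := by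
        rw [← mul_assoc, ← single_add_one_eq_mul, neg_add_cancel, HahnSeries.single_zero_one,
          one_mul]

end LaurentSeries

theorem RatFunc.isGeomBounded_coe {𝕜 : Type*} [NormedField 𝕜] (f : RatFunc 𝕜) :
    LaurentSeries.IsGeomBounded (f : 𝕜⸨X⸩) := by
  obtain ⟨q, hq, hq0⟩ := f.denom.exists_eq_pow_rootMultiplicity_mul_and_not_dvd f.denom_ne_zero 0
  simp only [map_zero, sub_zero, Polynomial.X_dvd_iff] at hq hq0
  have hf : (f : 𝕜⸨X⸩) = ((f.num : 𝕜⟦X⟧) : 𝕜⸨X⸩) * ((f.denom : 𝕜⟦X⟧) : 𝕜⸨X⸩)⁻¹ := by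
    rw [RatFunc.coe_coe, RatFunc.coe_coe, ← map_inv₀, ← map_mul, ← div_eq_mul_inv]
    exact congrArg _ (RatFunc.num_div_denom f).symm
  rw [hf, hq, Polynomial.coe_mul, Polynomial.coe_pow, Polynomial.coe_X,
    LaurentSeries.inv_coe_X_pow_mul _ (by rwa [Polynomial.constantCoeff_coe])]
  exact (LaurentSeries.isGeomBounded_coe (Polynomial.isGeomBounded_coe _)).mul
    ⟨_, _, Polynomial.isGeomBounded_inv_coe q hq0, rfl⟩

theorem Matrix.eq_map_inv_mulVec_of_map_mulVec_eq {n K L : Type*} [Fintype n] [DecidableEq n]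
    [CommRing K] [CommRing L] (f : K →+* L) {A : Matrix n n K} (hA : IsUnit A.det) {v w : n → L}
    (h : A.map f *ᵥ v = w) : v = A⁻¹.map f *ᵥ w := by
  rw [← h, mulVec_mulVec, ← Matrix.map_mul, nonsing_inv_mul A hA, Matrix.map_one f (map_zero f)
    (map_one f), one_mulVec]

/-- If `g ∈ (ℂ[[x]][x⁻¹])ⁿ` is a formal Laurent series vector satisfying
`g(x^p) = A(x) g(x)` with `p ≥ 2` and `A ∈ GLₙ(ℂ(x))`, then `g` converges in a punctured
neighborhood of `0`: each component has coefficients bounded by `C rᵏ`, i.e. positive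
radius of convergence. -/
theorem stmt5 (p n : ℕ) (hp : 2 ≤ p)
    (σ : LaurentSeries ℂ → LaurentSeries ℂ)
    (hσ : ∀ (f : LaurentSeries ℂ) (k : ℤ),
      (σ f).coeff k = if (p : ℤ) ∣ k then f.coeff (k / (p : ℤ)) else 0)
    (A : Matrix (Fin n) (Fin n) (RatFunc ℂ)) (hA : IsUnit A.det)
    (g : Fin n → LaurentSeries ℂ)
    (hg : ∀ i, σ (g i) = ∑ j, (A i j : LaurentSeries ℂ) * g j) :
    ∃ C r : ℝ, 0 < C ∧ 0 < r ∧ ∀ i (k : ℕ), ‖(g i).coeff (k : ℤ)‖ ≤ C * r ^ k := by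
  have hgA := Matrix.eq_map_inv_mulVec_of_map_mulVec_eq (algebraMap (RatFunc ℂ) ℂ⸨X⸩) hA
    (v := g) (w := fun i => σ (g i)) (funext fun i => (hg i).symm)
  obtain ⟨N, hN, hAβ, hgh⟩ := ((eventually_le_atBot 0).and <| (eventually_all.2 fun i =>
    eventually_all.2 fun j => (RatFunc.isGeomBounded_coe (A⁻¹ i j)).eventually_atBot).and <|
    eventually_all.2 fun j => LaurentSeries.eventually_atBot_eq_single_mul_coe (g j)).exists
  choose β hβ hAβ using hAβ
  choose h hgh using hgh
  have hσh : ∀ j, σ (g j) = HahnSeries.single (p * N) 1 * (expand p (by omega) (h j) : ℂ⸨X⸩) :=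
    fun j => LaurentSeries.eq_single_mul_coe_expand _ fun k => by rw [hσ, hgh]
  have hrec := LaurentSeries.X_pow_mul_eq_sum_mul_of_eq_sum_mul (by nlinarith) hgh hAβ hσh
    fun i => congrFun hgA i
  obtain ⟨C, r, hC, hr, hbound⟩ := exists_bound_of_forall_isGeomBounded
    (isGeomBounded_of_X_pow_mul_eq_sum_mul_expand hp _ hβ hrec)
  refine ⟨C * r ^ (-N).toNat, r, by positivity, by positivity, fun i k => ?_⟩
  rw [hgh i, LaurentSeries.coeff_single_mul_coe, if_pos (by omega), mul_assoc, ← pow_add,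
    show (-N).toNat + k = ((k : ℤ) - N).toNat by omega]
  exact hbound i _
end

section
/- Let p ≥ 2 be an integer, M ∈ Z with pM + s > M where s ∈ Z, let Ã(x) be a matrix of power series holomorphic and bounded on a disk D(0,R), and let r(x) be a convergent vector of Laurent series of valuation ≥ M. Then for sufficiently small ρ ∈ (0, min(R,1)), the equation ỹ(x) = x^s Ã(x) ỹ(x^p) − r(x) has a unique solution ỹ in the Banach space E_ρ of series F(x) = Σ_{m≥M} F_m x^m with norm |F|_ρ = Σ_{m≥M} |F_m| ρ^m < ∞. -/
/-!
Since `p * m + s > m` for `m ≥ M`, the coefficient of `x ^ k` in `x ^ s Ã(x) y(x ^ p)` involves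
only the coefficients `y_m` with `m < k`. So `y ↦ x ^ s Ã y(x ^ p) - r` is a contraction for the
`x`-adic topology on series of valuation `≥ M`: it has exactly one fixed point there, the
coefficientwise limit of its iterates from `0`.
With `‖Ã_a‖ ≤ C q⁻ᵃ` and `‖r_k‖ ≤ D q^(M - k)`, the same triangular structure lets an induction
on `k` propagate the bound `‖y_k‖ ≤ K q^(M - k)`: the contribution of `y_m` to `y_k` is at most
`C K q^(M - k) q^(s + (p - 1) m)`, a geometric series in `m` whose sum is `O(q)` because
`s + (p - 1) M ≥ 1`. For `q` small this closes with `K = 2 D`, and then `y ∈ E_ρ` for `ρ < q`.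
-/

open HahnSeries Finset Filter Topology

namespace MahlerEquation

section EqBelow

variable {ι R : Type*} [Zero R]

def EqBelow (t : ℤ) (y z : ι → LaurentSeries R) : Prop :=
  ∀ i, ∀ m < t, (y i).coeff m = (z i).coeff m

variable {t t' : ℤ} {x y z : ι → LaurentSeries R}

theorem EqBelow.symm (h : EqBelow t y z) : EqBelow t z y :=
  fun i m hm => (h i m hm).symm

theorem EqBelow.trans (h : EqBelow t x y) (h' : EqBelow t y z) : EqBelow t x z :=
  fun i m hm => (h i m hm).trans (h' i m hm)

theorem EqBelow.mono (h : EqBelow t y z) (ht : t' ≤ t) : EqBelow t' y z :=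
  fun i m hm => h i m (hm.trans_le ht)

theorem eq_of_forall_eqBelow (M : ℤ) (h : ∀ n : ℕ, EqBelow (M + n) y z) : y = z :=
  funext fun i => HahnSeries.ext <| funext fun k => h (k - M + 1).toNat i k (by omega)

theorem exists_forall_eqBelow_of_eqBelow_succ (M : ℤ) (x : ℕ → ι → LaurentSeries R)
    (hx : ∀ n : ℕ, EqBelow (M + n) (x n) (x (n + 1))) :
    ∃ y, ∀ n : ℕ, EqBelow (M + n) (x n) y := by
  have hmono : ∀ n n' : ℕ, n ≤ n' → EqBelow (M + n) (x n) (x n') := by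
    intro n n' hnn'
    induction n', hnn' using Nat.le_induction with
    | base => exact fun _ _ _ => rfl
    | succ n' hnn' ih => exact ih.trans ((hx n').mono (by omega))
  let N : ℤ → ℕ := fun k => (k - M + 1).toNat
  have hN : ∀ k, k < M + N k := fun k => by simp only [N]; omega
  refine ⟨fun i => ⟨fun k => (x (N k) i).coeff k, ?_⟩, fun n i k hk => ?_⟩
  · refine ((x 0 i).isPWO_support.union (bddBelow_Ici (a := M)).isWF.isPWO).mono fun k hk => ?_
    by_cases hkM : k < M
    · left
      have hN0 : N k = 0 := by simp only [N]; omega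
      simpa [hN0] using hk
    · exact Or.inr (not_lt.1 hkM)
  · change (x n i).coeff k = (x (N k) i).coeff k
    rcases le_total n (N k) with h | h
    · exact hmono _ _ h i k hk
    · exact (hmono _ _ h i k (hN k)).symm

theorem existsUnique_fixedPoint_of_eqBelow (M : ℤ)
    (Φ : (ι → LaurentSeries R) → ι → LaurentSeries R) (h0 : EqBelow M (Φ 0) 0)
    (hΦ : ∀ t ≥ M, ∀ y z, EqBelow t y z → EqBelow (t + 1) (Φ y) (Φ z)) :
    ∃! y, EqBelow M y 0 ∧ Φ y = y := by
  have hstep : ∀ n : ℕ, ∀ y z, EqBelow (M + n) y z → EqBelow (M + ↑(n + 1)) (Φ y) (Φ z) :=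
    fun n y z h => by simpa [add_assoc] using hΦ _ (by omega) y z h
  have hchain : ∀ n : ℕ, EqBelow (M + n) (Φ^[n] 0) (Φ^[n + 1] 0) := by
    intro n
    induction n with
    | zero => simpa using h0.symm
    | succ n ih =>
      rw [Function.iterate_succ_apply', Function.iterate_succ_apply' Φ (n + 1)]
      exact hstep n _ _ ih
  obtain ⟨y, hy⟩ := exists_forall_eqBelow_of_eqBelow_succ M _ hchain
  have hy0 : EqBelow M y 0 := by simpa using (hy 0).symm
  have hyΦ : Φ y = y := eq_of_forall_eqBelow M fun n => by
    have h := (hstep n _ _ (hy n)).symm.trans (Function.iterate_succ_apply' Φ n 0 ▸ hy (n + 1))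
    exact h.mono (by omega)
  refine ⟨y, ⟨hy0, hyΦ⟩, fun z ⟨hz0, hzΦ⟩ => eq_of_forall_eqBelow M fun n => ?_⟩
  induction n with
  | zero => simpa using hz0.trans hy0.symm
  | succ n ih => exact hzΦ ▸ hyΦ ▸ hstep n z y ih

end EqBelow

section Formal

variable {ι R : Type*} [Fintype ι] [Ring R]

/-- `σ` is the substitution `f(x) ↦ f(x ^ p)`. -/
def IsExpand (p : ℕ) (σ : LaurentSeries R → LaurentSeries R) : Prop :=
  ∀ f k, (σ f).coeff k = if (p : ℤ) ∣ k then f.coeff (k / p) else 0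

/-- `x ^ s A(x) y(x ^ p) - r(x)`, when `σ` is `IsExpand p`. -/
noncomputable def mahlerMap (s : ℤ) (σ : LaurentSeries R → LaurentSeries R)
    (A : Matrix ι ι (PowerSeries R)) (r y : ι → LaurentSeries R) : ι → LaurentSeries R :=
  fun i => single s (1 : R) * (∑ j, (A i j : LaurentSeries R) * σ (y j)) - r i

variable {p : ℕ} {σ : LaurentSeries R → LaurentSeries R}

theorem IsExpand.map_zero (hσ : IsExpand p σ) : σ 0 = 0 := by
  ext k
  simp [hσ 0 k]

theorem IsExpand.coeff_mul_left (hσ : IsExpand p σ) (hp : 0 < p) (f : LaurentSeries R)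
    (m : ℤ) : (σ f).coeff (p * m) = f.coeff m := by
  rw [hσ, if_pos (dvd_mul_right _ _), Int.mul_ediv_cancel_left _ (by omega)]

theorem IsExpand.coeff_congr (hσ : IsExpand p σ) (hp : 0 < p) {f g : LaurentSeries R} {t : ℤ}
    (h : ∀ m < t, f.coeff m = g.coeff m) : ∀ b < p * t, (σ f).coeff b = (σ g).coeff b := by
  intro b hb
  by_cases hpb : (p : ℤ) ∣ b
  · obtain ⟨m, rfl⟩ := hpb
    rw [hσ.coeff_mul_left hp, hσ.coeff_mul_left hp]
    exact h m (lt_of_mul_lt_mul_left hb (by omega))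
  · rw [hσ, hσ, if_neg hpb, if_neg hpb]

theorem coeff_coe_mul_congr (f : PowerSeries R) {g g' : LaurentSeries R} {u j : ℤ}
    (h : ∀ b < u, g.coeff b = g'.coeff b) (hj : j < u) :
    ((f : LaurentSeries R) * g).coeff j = ((f : LaurentSeries R) * g').coeff j := by
  rw [← sub_eq_zero, ← coeff_sub, ← mul_sub, coeff_mul]
  refine sum_eq_zero fun ab hab => ?_
  obtain ⟨ha, -, hab⟩ := mem_antidiagonal.1 hab
  have ha0 : 0 ≤ ab.1 := by
    by_contra! ha0
    exact ha (by rw [PowerSeries.coeff_coe, if_pos ha0])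
  rw [coeff_sub, h ab.2 (by omega), sub_self, mul_zero]

theorem mahlerMap_coeff (s : ℤ) (A : Matrix ι ι (PowerSeries R)) (r y : ι → LaurentSeries R)
    (i : ι) (k : ℤ) :
    (mahlerMap s σ A r y i).coeff k =
      ∑ j, ((A i j : LaurentSeries R) * σ (y j)).coeff (k - s) - (r i).coeff k := by
  simp [mahlerMap, coeff_single_mul, coeff_sum]

theorem mahlerMap_zero (hσ : IsExpand p σ) (s : ℤ) (A : Matrix ι ι (PowerSeries R))
    (r : ι → LaurentSeries R) : mahlerMap s σ A r 0 = -r := by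
  ext i : 1
  simp [mahlerMap, hσ.map_zero]

theorem mahlerMap_eqBelow (hp : 0 < p) (hσ : IsExpand p σ) {M s : ℤ} (hps : M < p * M + s)
    (A : Matrix ι ι (PowerSeries R)) (r : ι → LaurentSeries R) {t : ℤ} (ht : M ≤ t)
    {y z : ι → LaurentSeries R} (h : EqBelow t y z) :
    EqBelow (t + 1) (mahlerMap s σ A r y) (mahlerMap s σ A r z) := by
  intro i k hk
  rw [mahlerMap_coeff, mahlerMap_coeff]
  congr 1
  refine sum_congr rfl fun j _ => coeff_coe_mul_congr _ (hσ.coeff_congr hp (h j)) ?_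
  nlinarith

theorem IsExpand.coeff_coe_mul (hσ : IsExpand p σ) (hp : 0 < p) (f : PowerSeries R)
    {y : LaurentSeries R} {M : ℤ} (hy : ∀ m < M, y.coeff m = 0) (j : ℤ) :
    ((f : LaurentSeries R) * σ y).coeff j =
      ∑ m ∈ Icc M (j / p), (f : LaurentSeries R).coeff (j - p * m) * y.coeff m := by
  have hσy : ∀ b, (σ y).coeff b ≠ 0 →
      ∃ m, b = p * m ∧ M ≤ m ∧ (σ y).coeff b = y.coeff m := by
    intro b hb
    rw [hσ] at hb
    split_ifs at hb with hpb
    · obtain ⟨m, rfl⟩ := hpb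
      rw [Int.mul_ediv_cancel_left _ (by omega)] at hb
      exact ⟨m, rfl, not_lt.1 fun hm => hb (hy m hm), hσ.coeff_mul_left hp y m⟩
    · exact absurd rfl hb
  have hf : ∀ a, (f : LaurentSeries R).coeff a ≠ 0 → 0 ≤ a := fun a ha =>
    not_lt.1 fun ha' => ha (by rw [PowerSeries.coeff_coe, if_pos ha'])
  rw [coeff_mul]
  refine sum_bij_ne_zero (fun ab _ _ => ab.2 / p) ?_ ?_ ?_ ?_
  · rintro ⟨a, b⟩ hab -
    obtain ⟨ha, hb, rfl⟩ := mem_antidiagonal.1 hab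
    obtain ⟨m, rfl, hm, -⟩ := hσy b hb
    have ha0 := hf a ha
    rw [Int.mul_ediv_cancel_left _ (by omega), mem_Icc, Int.le_ediv_iff_mul_le (by omega)]
    exact ⟨hm, by linarith⟩
  · rintro ⟨a, b⟩ hab - ⟨a', b'⟩ hab' - h
    obtain ⟨-, hb, hj⟩ := mem_antidiagonal.1 hab
    obtain ⟨-, hb', hj'⟩ := mem_antidiagonal.1 hab'
    obtain ⟨m, rfl, -, -⟩ := hσy b hb
    obtain ⟨m', rfl, -, -⟩ := hσy b' hb'
    simp only [Int.mul_ediv_cancel_left _ (show (p : ℤ) ≠ 0 by omega)] at h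
    subst h
    simp only [Prod.mk.injEq, and_true]
    omega
  · intro m _ hne
    refine ⟨(j - p * m, p * m), mem_antidiagonal.2 ⟨left_ne_zero_of_mul hne, ?_, by ring⟩, ?_,
      Int.mul_ediv_cancel_left _ (by omega)⟩
    · rw [mem_support, hσ.coeff_mul_left hp]
      exact right_ne_zero_of_mul hne
    · rwa [hσ.coeff_mul_left hp]
  · rintro ⟨a, b⟩ hab hne
    obtain ⟨-, hb, rfl⟩ := mem_antidiagonal.1 hab
    obtain ⟨m, rfl, -, hbm⟩ := hσy _ hb
    simp only [Int.mul_ediv_cancel_left _ (show (p : ℤ) ≠ 0 by omega), add_sub_cancel_right,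
      hbm]

end Formal

section Estimates

theorem sum_Icc_zpow_le {K : Type*} [Field K] [LinearOrder K] [IsStrictOrderedRing K] {x : K}
    (hx0 : 0 < x) (hx1 : x < 1) (a b : ℤ) : ∑ m ∈ Icc a b, x ^ m ≤ x ^ a / (1 - x) := by
  rw [Int.Icc_eq_finset_map, sum_map]
  simp only [Function.Embedding.trans_apply, Nat.castEmbedding_apply, addLeftEmbedding_apply,
    zpow_add₀ hx0.ne', zpow_natCast, ← mul_sum]
  rw [div_eq_mul_one_div]
  gcongr
  rw [range_eq_Ico]
  simpa using geom_sum_Ico_le_of_lt_one (m := 0) (n := (b + 1 - a).toNat) hx0.le hx1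

variable {ι R : Type*} [Fintype ι] [NormedRing R] {p : ℕ}
  {σ : LaurentSeries R → LaurentSeries R}

theorem IsExpand.norm_coeff_coe_mul_le (hσ : IsExpand p σ) (hp : 2 ≤ p) {M s k : ℤ}
    (hps : M < p * M + s) {q C K : ℝ} (hq0 : 0 < q) (hq : q ≤ 1 / 2) (hC : 0 ≤ C) (hK : 0 ≤ K)
    {f : PowerSeries R} (hf : ∀ a : ℤ, ‖(f : LaurentSeries R).coeff a‖ ≤ C * q ^ (-a))
    {y : LaurentSeries R} (hy0 : ∀ m < M, y.coeff m = 0)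
    (hy : ∀ m < k, ‖y.coeff m‖ ≤ K * q ^ (M - m)) :
    ‖((f : LaurentSeries R) * σ y).coeff (k - s)‖ ≤ 2 * C * K * q ^ (M - k + 1) := by
  set x := q ^ ((p : ℤ) - 1)
  have hx0 : 0 < x := by positivity
  have hxq : x ≤ q := by
    simpa using zpow_le_zpow_right_of_le_one₀ hq0 (by linarith) (show (1 : ℤ) ≤ p - 1 by omega)
  have hterm : ∀ m ∈ Icc M ((k - s) / p),
      ‖(f : LaurentSeries R).coeff (k - s - p * m) * y.coeff m‖ ≤
        C * K * q ^ (M - k + s) * x ^ m := by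
    intro m hm
    rw [mem_Icc, Int.le_ediv_iff_mul_le (by omega)] at hm
    have hmk : m < k := by nlinarith
    calc _ ≤ C * q ^ (-(k - s - p * m)) * (K * q ^ (M - m)) :=
          (norm_mul_le _ _).trans (mul_le_mul (hf _) (hy m hmk) (norm_nonneg _) (by positivity))
      _ = C * K * q ^ ((M - k + s) + ((p : ℤ) - 1) * m) := by
        rw [mul_mul_mul_comm, ← zpow_add₀ hq0.ne']
        congr 2
        ring
      _ = C * K * q ^ (M - k + s) * x ^ m := by
        rw [zpow_add₀ hq0.ne', zpow_mul]
        ring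
  -- `s + (p - 1) * M ≥ 1`: the series starts at `q ^ 1`
  have hgeom : q ^ (M - k + s) * x ^ M ≤ q ^ (M - k + 1) := by
    rw [← zpow_mul, ← zpow_add₀ hq0.ne']
    exact zpow_le_zpow_right_of_le_one₀ hq0 (by linarith) (by nlinarith)
  calc ‖((f : LaurentSeries R) * σ y).coeff (k - s)‖
      ≤ ∑ m ∈ Icc M ((k - s) / p),
          ‖(f : LaurentSeries R).coeff (k - s - p * m) * y.coeff m‖ := by
        rw [hσ.coeff_coe_mul (by omega) f hy0]
        exact norm_sum_le _ _
    _ ≤ C * K * q ^ (M - k + s) * ∑ m ∈ Icc M ((k - s) / p), x ^ m := by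
        rw [mul_sum]
        exact sum_le_sum hterm
    _ ≤ C * K * q ^ (M - k + s) * (x ^ M / (1 - x)) := by
        gcongr
        exact sum_Icc_zpow_le hx0 (by linarith) _ _
    _ = C * K * (q ^ (M - k + s) * x ^ M) * (1 - x)⁻¹ := by ring
    _ ≤ C * K * q ^ (M - k + 1) * 2 := by
        gcongr
        · exact inv_nonneg.2 (by linarith)
        · rw [inv_le_comm₀ (by linarith) two_pos]
          linarith
    _ = 2 * C * K * q ^ (M - k + 1) := by ring

theorem norm_coeff_coe_le_mul_zpow_neg {f : PowerSeries R} {C ρ q : ℝ} (hC : 0 ≤ C)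
    (hq0 : 0 < q) (hqρ : q ≤ ρ) (hf : ∀ a : ℕ, ‖PowerSeries.coeff a f‖ ≤ C / ρ ^ a) (a : ℤ) :
    ‖(f : LaurentSeries R).coeff a‖ ≤ C * q ^ (-a) := by
  rw [PowerSeries.coeff_coe]
  split_ifs with ha
  · rw [norm_zero]
    positivity
  · lift a to ℕ using not_lt.1 ha
    calc ‖PowerSeries.coeff (a : ℤ).natAbs f‖ ≤ C / ρ ^ a := hf _
      _ ≤ C / q ^ a := by gcongr
      _ = C * q ^ (-(a : ℤ)) := by rw [zpow_neg, zpow_natCast, div_eq_mul_inv]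

theorem exists_norm_coeff_le_mul_zpow {r : ι → LaurentSeries R} {M : ℤ}
    (hr0 : ∀ i, ∀ k < M, (r i).coeff k = 0) {Cr ρ q : ℝ} (hρ : 0 ≤ ρ)
    (hr : ∀ i (k : ℕ), ‖(r i).coeff k‖ ≤ Cr * ρ ^ k) (hq0 : 0 < q) (hq1 : q ≤ 1)
    (hqρ : ρ * q ≤ 1) : ∃ D, 0 ≤ D ∧ ∀ i k, ‖(r i).coeff k‖ ≤ D * q ^ (M - k) := by
  set D₀ := ∑ i, ∑ k ∈ Ico M 0, ‖(r i).coeff k‖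
  set D := max (Cr * q ^ (-M)) D₀
  have hD : 0 ≤ D := le_max_of_le_right (by positivity)
  refine ⟨D, hD, fun i k => ?_⟩
  rcases lt_or_ge k M with hkM | hkM
  · rw [hr0 i k hkM, norm_zero]
    positivity
  rcases lt_or_ge k 0 with hk0 | hk0
  · calc ‖(r i).coeff k‖ ≤ ∑ k ∈ Ico M 0, ‖(r i).coeff k‖ :=
          single_le_sum (fun _ _ => norm_nonneg _) (mem_Ico.2 ⟨hkM, hk0⟩)
      _ ≤ D₀ := single_le_sum (f := fun i => ∑ k ∈ Ico M 0, ‖(r i).coeff k‖)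
          (fun _ _ => by positivity) (mem_univ i)
      _ ≤ D := le_max_right _ _
      _ ≤ D * q ^ (M - k) :=
          le_mul_of_one_le_right hD (one_le_zpow_of_nonpos₀ hq0 hq1 (by omega))
  · lift k to ℕ using hk0
    have hCr : 0 ≤ Cr := by simpa using (norm_nonneg _).trans (hr i 0)
    calc ‖(r i).coeff k‖ ≤ Cr * ρ ^ k := hr i k
      _ ≤ Cr * q ^ (-(k : ℤ)) := by
        rw [zpow_neg, zpow_natCast, ← inv_pow]
        gcongr
        simpa using (le_inv_mul_iff₀' hq0 (b := 1)).2 hqρ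
      _ = Cr * q ^ (-M) * q ^ (M - k) := by rw [mul_assoc, ← zpow_add₀ hq0.ne']; ring_nf
      _ ≤ D * q ^ (M - k) := by gcongr; exact le_max_left _ _

theorem summable_norm_coeff_mul_zpow {y : LaurentSeries R} {M : ℤ} {K q ρ : ℝ}
    (hy : ∀ k, ‖y.coeff k‖ ≤ K * q ^ (M - k)) (hρ0 : 0 < ρ) (hρq : ρ < q) :
    Summable fun n : ℕ => ‖y.coeff (M + n)‖ * ρ ^ (M + n) := by
  have hq0 : 0 < q := hρ0.trans hρq
  refine .of_nonneg_of_le (fun n => by positivity) (fun n => ?_)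
    ((summable_geometric_of_lt_one (by positivity) ((div_lt_one hq0).2 hρq)).mul_left
      (K * ρ ^ M))
  calc ‖y.coeff (M + n)‖ * ρ ^ (M + n) ≤ K * q ^ (M - (M + n)) * ρ ^ (M + n) := by
        gcongr
        exact hy _
    _ = K * ρ ^ M * (ρ / q) ^ n := by
        rw [show M - (M + n) = -(n : ℤ) by ring, zpow_neg, zpow_add₀ hρ0.ne', zpow_natCast,
          zpow_natCast, div_pow]
        field_simp

theorem norm_coeff_le_of_mahlerMap_eq (hσ : IsExpand p σ) (hp : 2 ≤ p) {M s : ℤ}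
    (hps : M < p * M + s) {A : Matrix ι ι (PowerSeries R)} {r : ι → LaurentSeries R}
    {q C D K : ℝ} (hq0 : 0 < q) (hq : q ≤ 1 / 2) (hC : 0 ≤ C) (hK : 0 ≤ K)
    (hA : ∀ i j a, ‖(A i j : LaurentSeries R).coeff a‖ ≤ C * q ^ (-a))
    (hr : ∀ i k, ‖(r i).coeff k‖ ≤ D * q ^ (M - k))
    (hKD : Fintype.card ι * (2 * C * K * q) + D ≤ K)
    {y : ι → LaurentSeries R} (hy0 : EqBelow M y 0) (hy : mahlerMap s σ A r y = y) (i : ι)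
    (k : ℤ) : ‖(y i).coeff k‖ ≤ K * q ^ (M - k) := by
  have hlow : ∀ i, ∀ k < M, ‖(y i).coeff k‖ ≤ K * q ^ (M - k) := fun i k hk => by
    rw [hy0 i k hk, Pi.zero_apply, coeff_zero, norm_zero]
    positivity
  suffices h : ∀ n : ℕ, ∀ i, ∀ k < M + n, ‖(y i).coeff k‖ ≤ K * q ^ (M - k) from
    h (k - M + 1).toNat i k (by omega)
  intro n
  induction n with
  | zero => exact fun i k hk => hlow i k (by simpa using hk)
  | succ n ih =>
    intro i k hk
    rcases lt_or_ge k M with hkM | hkM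
    · exact hlow i k hkM
    have hterm : ∀ j, ‖((A i j : LaurentSeries R) * σ (y j)).coeff (k - s)‖ ≤
        2 * C * K * q ^ (M - k + 1) := fun j =>
      hσ.norm_coeff_coe_mul_le hp hps hq0 hq hC hK (hA i j) (hy0 j) fun m hm =>
        ih j m (by omega)
    rw [← hy, mahlerMap_coeff]
    calc _ ≤ ∑ j, ‖((A i j : LaurentSeries R) * σ (y j)).coeff (k - s)‖ + ‖(r i).coeff k‖ :=
          (norm_sub_le _ _).trans (add_le_add_left (norm_sum_le _ _) _)
      _ ≤ ∑ _j : ι, 2 * C * K * q ^ (M - k + 1) + D * q ^ (M - k) :=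
          add_le_add (sum_le_sum fun j _ => hterm j) (hr i k)
      _ = (Fintype.card ι * (2 * C * K * q) + D) * q ^ (M - k) := by
          rw [sum_const, card_univ, nsmul_eq_mul, zpow_add_one₀ hq0.ne']
          ring
      _ ≤ K * q ^ (M - k) := by gcongr

end Estimates

end MahlerEquation

open MahlerEquation

/-- Fixed-point lemma.  Let `p ≥ 2`, `M, s ∈ ℤ` with `pM + s > M`, let `Ã(x)`
be a matrix of power series holomorphic and bounded on `D(0,R)` (encoded by Cauchy-type
coefficient bounds `‖Ã_k‖ ≤ C/Rᵏ`), and let `r(x)` be a convergent vector of Laurent series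
of valuation `≥ M`.  Then for all sufficiently small `ρ ∈ (0, min(R,1))` the equation
`ỹ(x) = x^s Ã(x) ỹ(x^p) − r(x)` has a unique solution `ỹ` in the Banach space `E_ρ` of
series `F = Σ_{m ≥ M} F_m x^m` with `Σ_{m ≥ M} ‖F_m‖ ρ^m < ∞`. -/
theorem stmt7 (p n : ℕ) (hp : 2 ≤ p) (M s : ℤ) (hps : M < (p : ℤ) * M + s)
    (σ : LaurentSeries ℂ → LaurentSeries ℂ)
    (hσ : ∀ (f : LaurentSeries ℂ) (k : ℤ),
      (σ f).coeff k = if (p : ℤ) ∣ k then f.coeff (k / (p : ℤ)) else 0)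
    (R : ℝ) (hR : 0 < R)
    (Atil : Matrix (Fin n) (Fin n) (PowerSeries ℂ))
    (hAtil : ∃ C : ℝ, ∀ i j (k : ℕ), ‖(PowerSeries.coeff k) (Atil i j)‖ ≤ C / R ^ k)
    (r : Fin n → LaurentSeries ℂ)
    (hrM : ∀ i (k : ℤ), k < M → (r i).coeff k = 0)
    (hrconv : ∃ Cr ρr : ℝ, 0 < ρr ∧ ∀ i (k : ℕ), ‖(r i).coeff (k : ℤ)‖ ≤ Cr * ρr ^ k) :
    ∃ ρ₀ : ℝ, 0 < ρ₀ ∧ ρ₀ ≤ min R 1 ∧ ∀ ρ : ℝ, 0 < ρ → ρ < ρ₀ →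
      ∃! y : Fin n → LaurentSeries ℂ,
        (∀ i (k : ℤ), k < M → (y i).coeff k = 0) ∧
        (∀ i, Summable (fun k : ℕ => ‖(y i).coeff (M + (k : ℤ))‖ * ρ ^ (M + (k : ℤ)))) ∧
        (∀ i, y i =
          HahnSeries.single s (1 : ℂ) *
            (∑ j, ((Atil i j : PowerSeries ℂ) : LaurentSeries ℂ) * σ (y j)) - r i) := by
  obtain ⟨C₀, hC₀⟩ := hAtil
  obtain ⟨Cr, ρr, hρr, hr⟩ := hrconv
  set C := max C₀ 0
  have hC : 0 ≤ C := le_max_right _ _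
  have hsmall : ∀ c : ℝ, ∀ᶠ q in 𝓝 0, c * q ≤ 1 := fun c =>
    (by simpa using (continuous_const_mul c).tendsto 0 : Tendsto (c * ·) (𝓝 0) (𝓝 0))
      |>.eventually_le_const one_pos
  obtain ⟨q, ⟨hq2, hqR, hqρ, hqC⟩, hq0⟩ :=
    ((((eventually_le_nhds (by norm_num : (0 : ℝ) < 1 / 2)).and ((eventually_le_nhds hR).and
      ((hsmall ρr).and (hsmall (4 * n * C))))).filter_mono nhdsWithin_le_nhds).and
      (self_mem_nhdsWithin (s := Set.Ioi 0))).exists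
  obtain ⟨D, hD, hrD⟩ := exists_norm_coeff_le_mul_zpow hrM hρr.le hr hq0 (by linarith) hqρ
  have hA : ∀ i j a, ‖(Atil i j : LaurentSeries ℂ).coeff a‖ ≤ C * q ^ (-a) := fun i j =>
    norm_coeff_coe_le_mul_zpow_neg hC hq0 hqR fun a =>
      (hC₀ i j a).trans (by gcongr; exact le_max_left _ _)
  obtain ⟨y, ⟨hy0, hyΦ⟩, hyuniq⟩ := existsUnique_fixedPoint_of_eqBelow M (mahlerMap s σ Atil r)
    (by rw [mahlerMap_zero hσ]; intro i k hk; simp [hrM i k hk])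
    fun t ht y z h => mahlerMap_eqBelow (by omega) hσ hps Atil r ht h
  have hy := norm_coeff_le_of_mahlerMap_eq hσ hp hps hq0 hq2 hC (K := 2 * D) (by positivity) hA
    hrD (by rw [Fintype.card_fin]; nlinarith [mul_le_mul_of_nonneg_right hqC hD]) hy0 hyΦ
  refine ⟨q, hq0, le_min hqR (by linarith), fun ρ hρ hρq => ⟨y, ⟨hy0, fun i =>
    summable_norm_coeff_mul_zpow (hy i) hρ hρq, fun i => (congrFun hyΦ i).symm⟩, ?_⟩⟩
  rintro z ⟨hz0, -, hz⟩
  exact hyuniq z ⟨hz0, funext fun i => (hz i).symm⟩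
end

section
/- Let p > 1, let B̃_1 ∈ GL_n(C), and suppose F is a holomorphic vector function on a sector S = {t : |t| > K, α < arg t < β} satisfying F(pt) = F(t) and F(qt) = B̃_1 F(t) on S, where exp(2πi log(q)/log(p)) is not a root of unity. Then F is a finite sum F(t) = Σ_{ℓ ∈ Λ} F_ℓ t^{2πiℓ/log(p)} over the finite set Λ of integers ℓ for which exp(2πi ℓ log(q)/log(p)) is an eigenvalue of B̃_1; in particular F extends analytically to the Riemann surface of log(t). -/
/-!
Writing `t = exp s` turns `F` into a function `H` on a half-strip with `H (s + log p) = H s` and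
`H (s + log q) = B̃₁ H s`. On a horizontal line `H` is (after periodic extension) a continuous
`log p`-periodic function, and the twisted relation gives `B̃₁ v_ℓ = exp (2πiℓ log q / log p) v_ℓ`
for its Fourier coefficients `v_ℓ`; so they vanish off `Λ` and the Fourier series is a finite sum
of exponentials. The identity theorem spreads this equality from the line to the whole strip.
`Λ` is finite because `ℓ ↦ exp (2πi log q / log p) ^ ℓ` is injective, the base not being a root
of unity.
-/

open Complex Set Function MeasureTheory Matrix
open scoped Real

theorem Set.Finite.setOf_zpow_mem {G₀ : Type*} [GroupWithZero G₀] {c : G₀} (hc : c ≠ 0)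
    (hroot : ¬∃ k : ℕ, 0 < k ∧ c ^ k = 1) {s : Set G₀} (hs : s.Finite) :
    {ℓ : ℤ | c ^ ℓ ∈ s}.Finite := by
  have hu : ¬IsOfFinOrder (Units.mk0 c hc) := fun h => hroot <| by
    simpa [isOfFinOrder_iff_pow_eq_one, Units.ext_iff] using h
  have hinj : Injective fun ℓ : ℤ => c ^ ℓ := by
    simpa [Function.comp_def] using
      Units.val_injective.comp (injective_zpow_iff_not_isOfFinOrder.2 hu)
  exact hs.preimage hinj.injOn

theorem Matrix.eq_zero_of_mulVec_eq_smul {ι : Type*} [Fintype ι] [DecidableEq ι]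
    {B : Matrix ι ι ℂ} {μ : ℂ} (hμ : μ ∉ spectrum ℂ B) {v : ι → ℂ} (hv : B *ᵥ v = μ • v) :
    v = 0 := by
  by_contra hv0
  rw [← Matrix.spectrum_toLin', ← Module.End.hasEigenvalue_iff_mem_spectrum] at hμ
  exact hμ (Module.End.hasEigenvalue_of_hasEigenvector ⟨Module.End.mem_eigenspace_iff.2 hv, hv0⟩)

section FourierTwist

variable {T : ℝ} [Fact (0 < T)] {E F : Type*} [NormedAddCommGroup E] [NormedSpace ℂ E]
  [NormedAddCommGroup F] [NormedSpace ℂ F]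

theorem fourierCoeff_comp_add (f : AddCircle T → E) (a : AddCircle T) (n : ℤ) :
    fourierCoeff (fun x => f (x + a)) n = fourier n a • fourierCoeff f n := by
  simp only [fourierCoeff]
  rw [← integral_smul, ← integral_add_right_eq_self _ (-a)]
  refine integral_congr_ae (ae_of_all _ fun x => ?_)
  simp only [neg_add_cancel_right, smul_smul, ← Circle.coe_mul, fourier_apply]
  rw [← AddCircle.toCircle_add, smul_add, smul_neg, neg_smul n a, neg_neg, add_comm]

theorem ContinuousLinearMap.fourierCoeff_comp [CompleteSpace E] [CompleteSpace F] (A : E →L[ℂ] F)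
    {f : AddCircle T → E} (hf : Continuous f) (n : ℤ) :
    fourierCoeff (fun x => A (f x)) n = A (fourierCoeff f n) := by
  simp only [fourierCoeff, ← map_smul]
  exact A.integral_comp_comm
    (((map_continuous (fourier (-n))).smul hf).integrable_of_hasCompactSupport
      (HasCompactSupport.of_compactSpace _))

theorem eq_sum_fourier_of_fourierCoeff_eq_zero {ι : Type*} [Fintype ι]
    (f : C(AddCircle T, ι → ℂ)) (Λ : Finset ℤ) (hΛ : ∀ ℓ ∉ Λ, fourierCoeff f ℓ = 0)
    (x : AddCircle T) : f x = ∑ ℓ ∈ Λ, fourier ℓ x • fourierCoeff f ℓ := by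
  ext i
  let fᵢ : C(AddCircle T, ℂ) := (ContinuousMap.eval i).comp f
  have hcoeff (ℓ : ℤ) : fourierCoeff fᵢ ℓ = fourierCoeff f ℓ i :=
    (ContinuousLinearMap.proj i).fourierCoeff_comp f.continuous ℓ
  have hzero (ℓ : ℤ) (hℓ : ℓ ∉ Λ) : fourierCoeff fᵢ ℓ = 0 := by rw [hcoeff, hΛ ℓ hℓ, Pi.zero_apply]
  have hsum := (has_pointwise_sum_fourier_series_of_summable
    (summable_of_ne_finset_zero hzero) x).unique
    (hasSum_sum_of_ne_finset_zero fun ℓ hℓ => by rw [hzero ℓ hℓ, zero_smul])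
  simp only [hcoeff, smul_eq_mul] at hsum
  simp only [Finset.sum_apply, Pi.smul_apply, smul_eq_mul]
  exact hsum.trans (Finset.sum_congr rfl fun ℓ _ => mul_comm _ _)

theorem fourierCoeff_eq_zero_of_comp_add_eq_mulVec {ι : Type*} [Fintype ι] [DecidableEq ι]
    {B : Matrix ι ι ℂ} {f : AddCircle T → ι → ℂ} (hf : Continuous f) {a : AddCircle T}
    (htw : ∀ x, f (x + a) = B *ᵥ f x) {n : ℤ} (hn : (fourier n a : ℂ) ∉ spectrum ℂ B) :
    fourierCoeff f n = 0 := by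
  refine Matrix.eq_zero_of_mulVec_eq_smul hn ?_
  let A : (ι → ℂ) →L[ℂ] ι → ℂ := LinearMap.toContinuousLinearMap B.mulVecLin
  calc B *ᵥ fourierCoeff f n = fourierCoeff (fun x => A (f x)) n :=
        (A.fourierCoeff_comp hf n).symm
    _ = fourierCoeff (fun x => f (x + a)) n := by simp [A, htw]
    _ = fourier n a • fourierCoeff f n := fourierCoeff_comp_add f a n

end FourierTwist

theorem Function.Periodic.exists_eq_sum_exp_of_add_eq_mulVec {ι : Type*} [Fintype ι]
    [DecidableEq ι] {g : ℝ → ι → ℂ} {L : ℝ} (hper : Periodic g L) (hL : 0 < L)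
    (hg : Continuous g) {B : Matrix ι ι ℂ} {a : ℝ} (htw : ∀ x, g (x + a) = B *ᵥ g x)
    (Λ : Finset ℤ) (hΛ : ∀ ℓ ∉ Λ, exp (2 * π * I * ℓ * a / L) ∉ spectrum ℂ B) :
    ∃ v : ℤ → ι → ℂ, ∀ x : ℝ, g x = ∑ ℓ ∈ Λ, exp (2 * π * I * ℓ * x / L) • v ℓ := by
  have : Fact (0 < L) := ⟨hL⟩
  let G : C(AddCircle L, ι → ℂ) := ⟨hper.lift, isQuotientMap_quotient_mk'.continuous_iff.2 hg⟩
  have hGtw (y : AddCircle L) : G (y + a) = B *ᵥ G y := by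
    induction y using QuotientAddGroup.induction_on
    exact htw _
  refine ⟨fourierCoeff G, fun x => ?_⟩
  have h := eq_sum_fourier_of_fourierCoeff_eq_zero G Λ
    (fun ℓ hℓ => fourierCoeff_eq_zero_of_comp_add_eq_mulVec G.continuous hGtw
      (by rw [fourier_coe_apply]; exact hΛ ℓ hℓ)) x
  simp only [fourier_coe_apply] at h
  exact h

theorem exists_lt_add_nat_mul {L : ℝ} (hL : 0 < L) (x₀ x : ℝ) : ∃ k : ℕ, x₀ < x + k * L := by
  obtain ⟨k, hk⟩ := exists_lt_nsmul hL (x₀ - x)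
  exact ⟨k, by rw [nsmul_eq_mul] at hk; linarith⟩

namespace Function.Periodic

variable {X : Type*} {L : ℝ}

theorem eq_of_eqOn_Ioi {f g : ℝ → X} (hf : Periodic f L) (hg : Periodic g L) (hL : 0 < L)
    {x₀ : ℝ} (h : EqOn f g (Ioi x₀)) : f = g := by
  funext x
  obtain ⟨k, hk⟩ := exists_lt_add_nat_mul hL x₀ x
  rw [← hf.nat_mul k x, ← hg.nat_mul k x, h hk]

theorem continuous_of_continuousOn_Ioi [TopologicalSpace X] {g : ℝ → X} (hg : Periodic g L)
    (hL : 0 < L) {x₀ : ℝ} (hcont : ContinuousOn g (Ioi x₀)) : Continuous g := by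
  refine continuous_iff_continuousAt.2 fun x => ?_
  obtain ⟨k, hk⟩ := exists_lt_add_nat_mul hL x₀ x
  have hshift : g = fun y => g (y + k * L) := funext fun y => (hg.nat_mul k y).symm
  rw [hshift]
  exact (hcont.continuousAt (isOpen_Ioi.mem_nhds hk)).comp (f := fun y => y + k * L)
    (continuous_add_const _).continuousAt

end Function.Periodic

theorem exists_periodic_extension {X : Type*} [TopologicalSpace X] {f : ℝ → X} {L x₀ : ℝ}
    (hL : 0 < L) (hf : ContinuousOn f (Ioi x₀)) (hper : ∀ x > x₀, f (x + L) = f x) :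
    ∃ g : ℝ → X, Periodic g L ∧ Continuous g ∧ EqOn g f (Ioi x₀) := by
  have hiter (y : ℝ) (hy : x₀ < y) (k : ℕ) : f (y + k * L) = f y := by
    induction k with
    | zero => simp
    | succ k ih =>
      rw [Nat.cast_succ, add_one_mul, ← add_assoc,
        hper _ (by nlinarith [(Nat.cast_nonneg k : (0:ℝ) ≤ k)]), ih]
  let g : ℝ → X := fun x => f (toIocMod hL x₀ x)
  have hg : Periodic g L := fun x => by simp only [g, toIocMod_add_right]
  have hgf : EqOn g f (Ioi x₀) := by
    intro x hx
    obtain ⟨hlo, hhi⟩ := toIocMod_mem_Ioc hL x₀ x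
    have hdiv := self_sub_toIocDiv_zsmul hL x₀ x
    obtain ⟨k, hk⟩ : ∃ k : ℕ, toIocDiv hL x₀ x = k := by
      refine Int.eq_ofNat_of_zero_le (Int.not_lt.1 fun hneg => ?_)
      have : (toIocDiv hL x₀ x : ℝ) ≤ -1 := by exact_mod_cast Int.le_sub_one_of_lt hneg
      rw [zsmul_eq_mul] at hdiv
      nlinarith [show (x₀ : ℝ) < x from hx]
    rw [hk, natCast_zsmul, nsmul_eq_mul] at hdiv
    show f (toIocMod hL x₀ x) = f x
    conv_rhs => rw [show x = toIocMod hL x₀ x + k * L by linarith]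
    exact (hiter _ hlo k).symm
  exact ⟨g, hg, hg.continuous_of_continuousOn_Ioi hL (hf.congr hgf), hgf⟩

open Filter Topology in
theorem DifferentiableOn.eqOn_of_eq_on_ray {E : Type*} [NormedAddCommGroup E] [NormedSpace ℂ E]
    [CompleteSpace E] {U : Set ℂ} {f g : ℂ → E} (hf : DifferentiableOn ℂ f U)
    (hg : DifferentiableOn ℂ g U) (hU : IsOpen U) (hU' : IsPreconnected U) {z₀ : ℂ}
    (hz₀ : z₀ ∈ U) (hfg : ∀ x : ℝ, 0 < x → f (z₀ + x) = g (z₀ + x)) : EqOn f g U := by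
  refine (hf.analyticOnNhd hU).eqOn_of_preconnected_of_frequently_eq (hg.analyticOnNhd hU) hU'
    hz₀ ?_
  have hray : Tendsto (fun x : ℝ => z₀ + x) (𝓝[>] (0 : ℝ)) (𝓝[≠] z₀) := by
    refine tendsto_nhdsWithin_of_tendsto_nhds_of_eventually_within _ ?_
      (eventually_nhdsWithin_of_forall fun x hx => ?_)
    · exact ((continuous_const.add continuous_ofReal).tendsto' (0 : ℝ) z₀ (by simp)).mono_left
        nhdsWithin_le_nhds
    · simpa using (ne_of_gt hx)
  exact hray.frequently (eventually_nhdsWithin_of_forall (s := Ioi 0) hfg).frequently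

theorem Set.OrdConnected.convex_reProdIm {s t : Set ℝ} (hs : s.OrdConnected)
    (ht : t.OrdConnected) : Convex ℝ (s ×ℂ t) :=
  (hs.convex.linear_preimage Complex.reLm).inter (ht.convex.linear_preimage Complex.imLm)

theorem exists_eq_sum_exp_of_add_eq_mulVec {ι : Type*} [Fintype ι] [DecidableEq ι]
    {A : Set ℝ} (hAu : IsUpperSet A) (hAo : IsOpen A) {α β : ℝ}
    (hne : (A ×ℂ Ioo α β).Nonempty) {H : ℂ → ι → ℂ}
    (hH : DifferentiableOn ℂ H (A ×ℂ Ioo α β)) {L : ℝ} (hL : 0 < L)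
    (hper : ∀ s ∈ A ×ℂ Ioo α β, H (s + L) = H s) {B : Matrix ι ι ℂ} {a : ℝ}
    (htw : ∀ s ∈ A ×ℂ Ioo α β, H (s + a) = B *ᵥ H s) (Λ : Finset ℤ)
    (hΛ : ∀ ℓ ∉ Λ, exp (2 * π * I * ℓ * a / L) ∉ spectrum ℂ B) :
    ∃ v : ℤ → ι → ℂ, ∀ s ∈ A ×ℂ Ioo α β, H s = ∑ ℓ ∈ Λ, exp (2 * π * I * ℓ * s / L) • v ℓ := by
  obtain ⟨z₀, hz₀⟩ := hne
  have hline (x : ℝ) (hx : z₀.re < x) : (x : ℂ) + z₀.im * I ∈ A ×ℂ Ioo α β := by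
    simpa [mem_reProdIm] using ⟨hAu hx.le hz₀.1, hz₀.2⟩
  obtain ⟨g, hgper, hgc, hgH⟩ := exists_periodic_extension (f := fun x : ℝ => H (x + z₀.im * I))
    hL (x₀ := z₀.re) (hH.continuousOn.comp (by fun_prop) hline)
    (fun x hx => by simpa [add_right_comm] using hper _ (hline x hx))
  have hgH' (x : ℝ) (hx : z₀.re < x) : g x = H (x + z₀.im * I) := hgH hx
  have hgtw : ∀ x, g (x + a) = B *ᵥ g x := by
    refine congrFun ((hgper.add_const a).eq_of_eqOn_Ioi (fun x => congrArg (B *ᵥ ·) (hgper x))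
      hL (x₀ := max z₀.re (z₀.re - a)) fun x hx => ?_)
    rw [mem_Ioi, max_lt_iff] at hx
    show g (x + a) = B *ᵥ g x
    rw [hgH' _ (by linarith), hgH' _ hx.1, ← htw _ (hline x hx.1)]
    congr 1
    push_cast
    ring
  obtain ⟨w, hw⟩ := hgper.exists_eq_sum_exp_of_add_eq_mulVec hL hgc hgtw Λ hΛ
  refine ⟨fun ℓ => exp (-(2 * π * I * ℓ * (z₀.im * I)) / L) • w ℓ, ?_⟩
  refine hH.eqOn_of_eq_on_ray (by fun_prop) (hAo.reProdIm isOpen_Ioo)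
    (hAu.ordConnected.convex_reProdIm ordConnected_Ioo).isPreconnected hz₀ fun x hx => ?_
  have hz : z₀ + x = ((z₀.re + x : ℝ) : ℂ) + z₀.im * I := by
    apply Complex.ext <;> simp
  rw [hz, ← hgH' _ (by linarith), hw]
  refine Finset.sum_congr rfl fun ℓ _ => ?_
  rw [smul_smul, ← Complex.exp_add]
  congr 2
  ring

open Filter Topology in
theorem eq_apply_zero_of_mul_invariant {E : Type*} [TopologicalSpace E] [T2Space E]
    {S : Set ℂ} {f : ℂ → E} {p : ℂ} (hp : 1 < ‖p‖) (hS : ∀ t ∈ S, p⁻¹ * t ∈ S)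
    (hf : ContinuousWithinAt f S 0) (hfp : ∀ t ∈ S, f (p * t) = f t) {t : ℂ} (ht : t ∈ S) :
    f t = f 0 := by
  have hp0 : p ≠ 0 := norm_pos_iff.1 (one_pos.trans hp)
  have hmem (k : ℕ) : p⁻¹ ^ k * t ∈ S := by
    induction k with
    | zero => simpa
    | succ k ih => simpa [pow_succ', mul_assoc] using hS _ ih
  have hval (k : ℕ) : f (p⁻¹ ^ k * t) = f t := by
    induction k with
    | zero => simp
    | succ k ih => rw [← ih, ← hfp _ (hmem _), pow_succ', mul_assoc, mul_inv_cancel_left₀ hp0]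
  have hlim : Tendsto (fun k : ℕ => p⁻¹ ^ k * t) atTop (𝓝[S] 0) := by
    refine tendsto_nhdsWithin_iff.2 ⟨?_, Eventually.of_forall hmem⟩
    simpa only [zero_mul] using (tendsto_pow_atTop_nhds_zero_of_norm_lt_one
      (by rwa [norm_inv, inv_lt_one₀ (one_pos.trans hp)])).mul_const t
  refine tendsto_nhds_unique ?_ (hf.tendsto.comp hlim)
  simp only [Function.comp_def, hval, tendsto_const_nhds]

def sector (K α β : ℝ) : Set ℂ := {t | K < ‖t‖ ∧ α < arg t ∧ arg t < β}

section Sector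

variable {ι : Type*} [Fintype ι] [DecidableEq ι] {p q K α β : ℝ} {F : ℂ → ι → ℂ}
  {B : Matrix ι ι ℂ}

-- `0 ∈ sector K α β` forces `K < 0`, so the sector is a cone and continuity at `0` makes `F`
-- constant.
theorem exists_eq_sum_cpow_of_zero_mem_sector (hp : 1 < p) (h0 : 0 ∈ sector K α β)
    (hF : ContinuousOn F (sector K α β)) (hFp : ∀ t ∈ sector K α β, F (p * t) = F t)
    (hFq : ∀ t ∈ sector K α β, F (q * t) = B *ᵥ F t) (Λ : Finset ℤ)
    (hΛ : ∀ ℓ ∉ Λ, exp (2 * π * I * ℓ * (Real.log q / Real.log p)) ∉ spectrum ℂ B) :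
    ∃ Fc : ℤ → ι → ℂ, ∀ t ∈ sector K α β,
      F t = ∑ ℓ ∈ Λ, t ^ (2 * π * I * ℓ / (Real.log p : ℂ)) • Fc ℓ := by
  have hK : K < 0 := by simpa using h0.1
  have hcone (t : ℂ) (ht : t ∈ sector K α β) : (p : ℂ)⁻¹ * t ∈ sector K α β := by
    rw [← ofReal_inv]
    refine ⟨hK.trans_le (norm_nonneg _), ?_⟩
    rw [arg_real_mul _ (by positivity)]
    exact ht.2
  have hconst (t : ℂ) (ht : t ∈ sector K α β) : F t = F 0 :=
    eq_apply_zero_of_mul_invariant (by simpa [abs_of_pos (one_pos.trans hp)]) hcone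
      (hF 0 h0) hFp ht
  refine ⟨fun ℓ => if ℓ = 0 then F 0 else 0, fun t ht => ?_⟩
  simp only [smul_ite, smul_zero, Finset.sum_ite_eq', Int.cast_zero, mul_zero, zero_div,
    cpow_zero, one_smul, hconst t ht]
  split_ifs with hΛ0
  · rfl
  · refine Matrix.eq_zero_of_mulVec_eq_smul (μ := 1) (by simpa using hΛ 0 hΛ0) ?_
    simpa [hconst _ h0] using (hFq 0 h0).symm

theorem exists_eq_sum_cpow_of_zero_notMem_sector (hp : 1 < p) (hq : 0 < q) (hα : -π < α)
    (hαβ : α < β) (hβ : β ≤ π) (h0 : 0 ∉ sector K α β)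
    (hF : DifferentiableOn ℂ F (sector K α β)) (hFp : ∀ t ∈ sector K α β, F (p * t) = F t)
    (hFq : ∀ t ∈ sector K α β, F (q * t) = B *ᵥ F t) (Λ : Finset ℤ)
    (hΛ : ∀ ℓ ∉ Λ, exp (2 * π * I * ℓ * (Real.log q / Real.log p)) ∉ spectrum ℂ B) :
    ∃ Fc : ℤ → ι → ℂ, ∀ t ∈ sector K α β,
      F t = ∑ ℓ ∈ Λ, t ^ (2 * π * I * ℓ / (Real.log p : ℂ)) • Fc ℓ := by
  set U := {x : ℝ | K < Real.exp x} ×ℂ Ioo α β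
  have hexp : MapsTo exp U (sector K α β) := by
    intro s ⟨hre, him⟩
    have harg : arg (exp s) = s.im := by
      rw [arg_exp, toIocMod_eq_self]
      exact ⟨hα.trans him.1, by linarith [him.2]⟩
    exact ⟨by rwa [norm_exp], by rw [harg]; exact him.1, by rw [harg]; exact him.2⟩
  have hne (t : ℂ) (ht : t ∈ sector K α β) : t ≠ 0 := fun h => h0 (h ▸ ht)
  have hlog (t : ℂ) (ht : t ∈ sector K α β) : log t ∈ U := by
    refine ⟨?_, by simpa [log_im] using ht.2⟩
    show K < Real.exp (log t).re
    rw [log_re, Real.exp_log (norm_pos_iff.2 (hne t ht))]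
    exact ht.1
  have hexp_log (x : ℝ) (hx : 0 < x) (s : ℂ) : exp (s + Real.log x) = x * exp s := by
    rw [exp_add, ← ofReal_exp, Real.exp_log hx, mul_comm]
  have hUne : U.Nonempty :=
    ⟨⟨K, (α + β) / 2⟩, show K < Real.exp K by linarith [Real.add_one_le_exp K],
      show α < (α + β) / 2 by linarith, show (α + β) / 2 < β by linarith⟩
  have hper (s : ℂ) (hs : s ∈ U) : F (exp (s + Real.log p)) = F (exp s) := by
    rw [hexp_log p (by linarith), hFp _ (hexp hs)]
  have htw (s : ℂ) (hs : s ∈ U) : F (exp (s + Real.log q)) = B *ᵥ F (exp s) := by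
    rw [hexp_log q hq, hFq _ (hexp hs)]
  obtain ⟨v, hv⟩ := exists_eq_sum_exp_of_add_eq_mulVec
    ((isUpperSet_Ioi (a := K)).preimage Real.exp_monotone)
    (isOpen_lt continuous_const Real.continuous_exp) hUne
    (hF.comp differentiable_exp.differentiableOn hexp) (Real.log_pos hp) hper htw Λ
    (fun ℓ hℓ => by rw [mul_div_assoc]; exact hΛ ℓ hℓ)
  refine ⟨v, fun t ht => ?_⟩
  have ht0 := hne t ht
  calc F t = F (exp (log t)) := by rw [exp_log ht0]
    _ = _ := hv _ (hlog t ht)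
    _ = _ := Finset.sum_congr rfl fun ℓ _ => by rw [cpow_def_of_ne_zero ht0]; ring_nf

end Sector

open Complex in
theorem stmt11_general (n : ℕ) (p q : ℝ) (hp : 1 < p) (hq : 1 < q)
    (B₁ : Matrix (Fin n) (Fin n) ℂ)
    (hroot : ¬ ∃ k : ℕ, 0 < k ∧
      Complex.exp (2 * Real.pi * Complex.I * (Real.log q / Real.log p)) ^ k = 1)
    (K α β : ℝ) (hα : -Real.pi < α) (hαβ : α < β) (hβ : β ≤ Real.pi)
    (S : Set ℂ) (hS : S = {t : ℂ | K < ‖t‖ ∧ α < Complex.arg t ∧ Complex.arg t < β})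
    (F : ℂ → (Fin n → ℂ)) (hF : DifferentiableOn ℂ F S)
    (hFp : ∀ t ∈ S, F ((p : ℂ) * t) = F t)
    (hFq : ∀ t ∈ S, F ((q : ℂ) * t) = B₁.mulVec (F t)) :
    {ℓ : ℤ | Complex.exp (2 * Real.pi * Complex.I * ℓ * (Real.log q / Real.log p))
        ∈ spectrum ℂ B₁}.Finite ∧
    ∃ Λ : Finset ℤ,
      (∀ ℓ ∈ Λ, Complex.exp (2 * Real.pi * Complex.I * ℓ * (Real.log q / Real.log p))
          ∈ spectrum ℂ B₁) ∧
      ∃ Fc : ℤ → (Fin n → ℂ),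
        ∀ t ∈ S, F t =
          ∑ ℓ ∈ Λ, (t ^ ((2 * Real.pi * Complex.I * ℓ) / (Real.log p : ℂ))) • Fc ℓ := by
  subst hS
  have hpow (ℓ : ℤ) : exp (2 * π * I * ℓ * (Real.log q / Real.log p)) =
      exp (2 * π * I * (Real.log q / Real.log p)) ^ ℓ := by
    rw [← exp_int_mul]
    ring_nf
  have hfin :
      {ℓ : ℤ | exp (2 * π * I * ℓ * (Real.log q / Real.log p)) ∈ spectrum ℂ B₁}.Finite := by
    simpa only [hpow] using B₁.finite_spectrum.setOf_zpow_mem (exp_ne_zero _) hroot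
  refine ⟨hfin, hfin.toFinset, fun ℓ hℓ => hfin.mem_toFinset.1 hℓ, ?_⟩
  have hΛ : ∀ ℓ ∉ hfin.toFinset,
      exp (2 * π * I * ℓ * (Real.log q / Real.log p)) ∉ spectrum ℂ B₁ :=
    fun ℓ hℓ h => hℓ (hfin.mem_toFinset.2 h)
  by_cases h0 : (0 : ℂ) ∈ sector K α β
  · exact exists_eq_sum_cpow_of_zero_mem_sector hp h0 hF.continuousOn hFp hFq _ hΛ
  · exact exists_eq_sum_cpow_of_zero_notMem_sector hp (by linarith) hα hαβ hβ h0 hF hFp hFq _ hΛ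

open Complex in
/-- Let `p > 1`, `B̃₁ ∈ GLₙ(ℂ)`, and `F` a holomorphic vector function on a
sector `S = {t : |t| > K, α < arg t < β}` with `F(pt) = F(t)` and `F(qt) = B̃₁ F(t)` on `S`,
where `exp(2πi log q / log p)` is not a root of unity.  Then the set `Λ` of integers `ℓ`
with `exp(2πi ℓ log q / log p)` an eigenvalue of `B̃₁` is finite, and `F` is a finite sum
`F(t) = Σ_{ℓ ∈ Λ} F_ℓ t^{2πiℓ/log p}` on `S`; in particular `F` extends analytically to the
Riemann surface of `log t`. -/
theorem stmt11 (n : ℕ) (p q : ℝ) (hp : 1 < p) (hq : 1 < q)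
    (B₁ : Matrix (Fin n) (Fin n) ℂ) (hB₁ : IsUnit B₁.det)
    (hroot : ¬ ∃ k : ℕ, 0 < k ∧
      Complex.exp (2 * Real.pi * Complex.I * (Real.log q / Real.log p)) ^ k = 1)
    (K α β : ℝ) (hα : -Real.pi < α) (hαβ : α < β) (hβ : β ≤ Real.pi)
    (S : Set ℂ) (hS : S = {t : ℂ | K < ‖t‖ ∧ α < Complex.arg t ∧ Complex.arg t < β})
    (F : ℂ → (Fin n → ℂ)) (hF : DifferentiableOn ℂ F S)
    (hFp : ∀ t ∈ S, F ((p : ℂ) * t) = F t)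
    (hFq : ∀ t ∈ S, F ((q : ℂ) * t) = B₁.mulVec (F t)) :
    {ℓ : ℤ | Complex.exp (2 * Real.pi * Complex.I * ℓ * (Real.log q / Real.log p))
        ∈ spectrum ℂ B₁}.Finite ∧
    ∃ Λ : Finset ℤ,
      (∀ ℓ ∈ Λ, Complex.exp (2 * Real.pi * Complex.I * ℓ * (Real.log q / Real.log p))
          ∈ spectrum ℂ B₁) ∧
      ∃ Fc : ℤ → (Fin n → ℂ),
        ∀ t ∈ S, F t =
          ∑ ℓ ∈ Λ, (t ^ ((2 * Real.pi * Complex.I * ℓ) / (Real.log p : ℂ))) • Fc ℓ :=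
  stmt11_general n p q hp hq B₁ hroot K α β hα hαβ hβ S hS F hF hFp hFq
end

section
/- Let p ≥ 2 be an integer, A(x) ∈ GL_n(C(x)), and suppose g is a function meromorphic on C, holomorphic on |x| > r_0/2 for some r_0 > 1 along with A(x), and satisfying g(x^p) = A(x) g(x) for |x| > r_0. Then g has polynomial growth at infinity: there exist constants L, d, M' > 0 with |g(x)| ≤ L (log|x|)^d |x|^{M'} for |x| > r_0. -/
/-!
Iterating `g(ξ^p) = A(ξ) g(ξ)` carries every `x` with `|x| > r₀` back to the compact annulus
`r₀ ≤ |ξ| ≤ r₀^p`, where `g` is bounded, at the cost of one factor `‖A(ξ)‖ ≤ K |ξ|^M` per step.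
The majorant `Φ(y) = L (log y)^d y^{M'}` with `d = log_p K` and `M' = M/(p-1)` satisfies
`Φ(y^p) = K y^M Φ(y)` exactly, so `‖g‖ ≤ Φ` propagates outward from the annulus.
-/

open Polynomial Filter
open scoped Matrix

theorem Polynomial.norm_eval_le_sum_mul_pow {𝕜 : Type*} [NormedField 𝕜] (P : 𝕜[X]) {x : 𝕜}
    (hx : 1 ≤ ‖x‖) :
    ‖P.eval x‖ ≤ (∑ i ∈ Finset.range (P.natDegree + 1), ‖P.coeff i‖) * ‖x‖ ^ P.natDegree := by
  rw [eval_eq_sum_range, Finset.sum_mul]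
  refine (norm_sum_le _ _).trans (Finset.sum_le_sum fun i hi => ?_)
  rw [norm_mul, norm_pow]
  gcongr
  exact Nat.lt_succ_iff.1 (Finset.mem_range.1 hi)

theorem Polynomial.exists_pos_le_norm_eval {P : ℂ[X]} {r : ℝ}
    (hP : ∀ x : ℂ, r ≤ ‖x‖ → P.eval x ≠ 0) :
    ∃ c > 0, ∀ x : ℂ, r ≤ ‖x‖ → c ≤ ‖P.eval x‖ := by
  obtain ⟨R, c, hc, hfar⟩ : ∃ R, ∃ c > 0, ∀ x : ℂ, R ≤ ‖x‖ → c ≤ ‖P.eval x‖ := by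
    rcases le_or_gt P.degree 0 with hdeg | hdeg
    · rw [eq_C_of_degree_le_zero hdeg] at hP ⊢
      have hr : r ≤ ‖((|r| : ℝ) : ℂ)‖ := by simp [le_abs_self]
      exact ⟨0, _, norm_pos_iff.2 (by simpa using hP _ hr), fun x _ => by simp⟩
    · have h := (P.tendsto_norm_atTop hdeg (z := fun x : ℂ => x) tendsto_comap).eventually_ge_atTop
        (1 : ℝ)
      obtain ⟨R, hR⟩ := eventually_atTop.1 (eventually_comap.1 h)
      exact ⟨R, 1, one_pos, fun x hx => hR _ hx x rfl⟩
  have hK : IsCompact (Metric.closedBall (0 : ℂ) R \ Metric.ball 0 r) :=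
    (isCompact_closedBall 0 R).diff Metric.isOpen_ball
  obtain ⟨B, hB⟩ := hK.exists_bound_of_continuousOn (f := fun x => (P.eval x)⁻¹) <|
    P.continuous.continuousOn.inv₀ fun x hx => hP x (by simpa using hx.2)
  refine ⟨min c (max B 1)⁻¹, by positivity, fun x hx => ?_⟩
  rcases le_or_gt R ‖x‖ with hxR | hxR
  · exact (min_le_left _ _).trans (hfar x hxR)
  · have hinv : ‖(P.eval x)⁻¹‖ ≤ max B 1 :=
      (hB x ⟨by simpa using hxR.le, by simpa using hx⟩).trans (le_max_left _ _)
    rw [norm_inv] at hinv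
    refine (min_le_right _ _).trans ?_
    rw [inv_le_comm₀ (by positivity) (norm_pos_iff.2 (hP x hx))]
    exact hinv

theorem RatFunc.exists_norm_eval_le_mul_pow {r : ℝ} (hr : 1 ≤ r) (f : RatFunc ℂ)
    (hf : ∀ x : ℂ, r ≤ ‖x‖ → f.denom.eval x ≠ 0) :
    ∃ (K : ℝ) (m : ℕ), ∀ x : ℂ, r ≤ ‖x‖ → ‖f.eval (RingHom.id ℂ) x‖ ≤ K * ‖x‖ ^ m := by
  obtain ⟨c, hc, hden⟩ := Polynomial.exists_pos_le_norm_eval hf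
  refine ⟨(∑ i ∈ Finset.range (f.num.natDegree + 1), ‖f.num.coeff i‖) / c, f.num.natDegree,
    fun x hx => ?_⟩
  have hnum := f.num.norm_eval_le_sum_mul_pow (hr.trans hx)
  calc ‖f.eval (RingHom.id ℂ) x‖ = ‖f.num.eval x‖ / ‖f.denom.eval x‖ := norm_div _ _
    _ ≤ (∑ i ∈ Finset.range (f.num.natDegree + 1), ‖f.num.coeff i‖) * ‖x‖ ^ f.num.natDegree / c :=
      div_le_div₀ (by positivity) hnum hc (hden x hx)
    _ = _ := by ring

theorem Matrix.norm_mulVec_le_of_norm_le {R m n : Type*} [NormedRing R] [Fintype m] [Fintype n]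
    {A : Matrix m n R} {B : ℝ} (hB : 0 ≤ B) (hA : ∀ i j, ‖A i j‖ ≤ B) (v : n → R) :
    ‖A *ᵥ v‖ ≤ Fintype.card n * B * ‖v‖ := by
  refine (pi_norm_le_iff_of_nonneg (by positivity)).2 fun i => ?_
  calc ‖(A *ᵥ v) i‖ ≤ ∑ j, ‖A i j‖ * ‖v j‖ :=
        (norm_sum_le _ _).trans (Finset.sum_le_sum fun j _ => norm_mul_le _ _)
    _ ≤ ∑ _j : n, B * ‖v‖ :=
        Finset.sum_le_sum fun j _ => mul_le_mul (hA i j) (norm_le_pi_norm v j) (norm_nonneg _) hB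
    _ = Fintype.card n * B * ‖v‖ := by
        rw [Finset.sum_const, Finset.card_univ, nsmul_eq_mul, mul_assoc]

theorem Matrix.exists_norm_map_eval_mulVec_le {ι κ : Type*} [Fintype ι] [Fintype κ] {r : ℝ}
    (hr : 1 ≤ r) (A : Matrix ι κ (RatFunc ℂ))
    (hA : ∀ i j (x : ℂ), r ≤ ‖x‖ → (A i j).denom.eval x ≠ 0) :
    ∃ (K : ℝ) (m : ℕ), ∀ x : ℂ, r ≤ ‖x‖ → ∀ v : κ → ℂ,
      ‖(A.map fun a => a.eval (RingHom.id ℂ) x) *ᵥ v‖ ≤ K * ‖x‖ ^ m * ‖v‖ := by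
  choose K m hKm using fun i j => RatFunc.exists_norm_eval_le_mul_pow hr (A i j) (hA i j)
  obtain ⟨K₀, hK₀⟩ := Finite.exists_le fun ij : ι × κ => K ij.1 ij.2
  obtain ⟨m₀, hm₀⟩ := Finite.exists_le fun ij : ι × κ => m ij.1 ij.2
  refine ⟨Fintype.card κ * max K₀ 0, m₀, fun x hx v => ?_⟩
  have hx1 : 1 ≤ ‖x‖ := hr.trans hx
  have hentry : ∀ i j, ‖(A.map fun a => a.eval (RingHom.id ℂ) x) i j‖ ≤ max K₀ 0 * ‖x‖ ^ m₀ :=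
    fun i j => (hKm i j x hx).trans <| mul_le_mul ((hK₀ (i, j)).trans (le_max_left _ _))
      (pow_le_pow_right₀ hx1 (hm₀ (i, j))) (by positivity) (le_max_right _ _)
  exact (norm_mulVec_le_of_norm_le (by positivity) hentry v).trans_eq (by ring)

theorem norm_le_of_norm_comp_pow_le {𝕜 E : Type*} [NormedField 𝕜] [IsAlgClosed 𝕜]
    [NormedAddCommGroup E] {g : 𝕜 → E} {Φ w : ℝ → ℝ} {p : ℕ} (hp : 1 < p) {r : ℝ} (hr : 1 < r)
    (hstep : ∀ ξ : 𝕜, r < ‖ξ‖ → ‖g (ξ ^ p)‖ ≤ w ‖ξ‖ * ‖g ξ‖)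
    (hw : ∀ y, r < y → 0 ≤ w y) (hΦ : ∀ y, r < y → w y * Φ y ≤ Φ (y ^ p))
    (hbase : ∀ x : 𝕜, r < ‖x‖ → ‖x‖ ≤ r ^ p → ‖g x‖ ≤ Φ ‖x‖) {x : 𝕜} (hx : r < ‖x‖) :
    ‖g x‖ ≤ Φ ‖x‖ := by
  suffices h : ∀ j : ℕ, ∀ x : 𝕜, r < ‖x‖ → ‖x‖ ≤ r ^ p ^ j → ‖g x‖ ≤ Φ ‖x‖ by
    obtain ⟨j, hj⟩ := pow_unbounded_of_one_lt ‖x‖ hr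
    exact h j x hx <| hj.le.trans <|
      pow_le_pow_right₀ hr.le (Nat.lt_pow_self hp).le
  intro j
  induction j with
  | zero => intro x hx hxj; rw [pow_zero, pow_one] at hxj; linarith
  | succ j ih =>
    intro x hx hxj
    by_cases hxp : ‖x‖ ≤ r ^ p
    · exact hbase x hx hxp
    obtain ⟨ξ, rfl⟩ := IsAlgClosed.exists_pow_nat_eq x (by omega : 0 < p)
    rw [norm_pow] at hx hxp hxj ⊢
    have hξ : r < ‖ξ‖ := lt_of_pow_lt_pow_left₀ p (norm_nonneg ξ) (not_le.1 hxp)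
    have hξj : ‖ξ‖ ≤ r ^ p ^ j := by
      rw [pow_succ, pow_mul] at hxj
      exact le_of_pow_le_pow_left₀ (by omega) (by positivity) hxj
    calc ‖g (ξ ^ p)‖ ≤ w ‖ξ‖ * ‖g ξ‖ := hstep ξ hξ
      _ ≤ w ‖ξ‖ * Φ ‖ξ‖ := mul_le_mul_of_nonneg_left (ih ξ hξ hξj) (hw _ hξ)
      _ ≤ Φ (‖ξ‖ ^ p) := hΦ _ hξ

theorem log_rpow_logb_mul_rpow_pow {p : ℕ} (hp : 1 < p) {K : ℝ} (hK : 0 < K) (L M : ℝ) {y : ℝ}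
    (hy : 1 ≤ y) :
    K * y ^ M * (L * Real.log y ^ Real.logb p K * y ^ (M / (p - 1))) =
      L * Real.log (y ^ p) ^ Real.logb p K * (y ^ p) ^ (M / (p - 1)) := by
  have hp' : (1 : ℝ) < p := by exact_mod_cast hp
  have hy0 : 0 < y := by linarith
  have hlog : Real.log (y ^ p) ^ Real.logb p K = K * Real.log y ^ Real.logb p K := by
    rw [Real.log_pow, Real.mul_rpow (by positivity) (Real.log_nonneg hy),
      Real.rpow_logb (by positivity) hp'.ne' hK]
  have hexp : (y ^ p) ^ (M / (p - 1)) = y ^ M * y ^ (M / (p - 1)) := by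
    rw [← Real.rpow_natCast_mul hy0.le, ← Real.rpow_add hy0]
    congr 1
    field_simp [show (p : ℝ) - 1 ≠ 0 by linarith]
    ring
  rw [hlog, hexp]
  ring

theorem exists_norm_le_log_rpow_mul_rpow {𝕜 E : Type*} [NormedField 𝕜] [IsAlgClosed 𝕜]
    [NormedAddCommGroup E] {g : 𝕜 → E} {p : ℕ} (hp : 1 < p) {r K M C : ℝ} (hr : 1 < r)
    (hK : 1 < K) (hM : 0 < M)
    (hstep : ∀ ξ : 𝕜, r < ‖ξ‖ → ‖g (ξ ^ p)‖ ≤ K * ‖ξ‖ ^ M * ‖g ξ‖)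
    (hbase : ∀ x : 𝕜, r < ‖x‖ → ‖x‖ ≤ r ^ p → ‖g x‖ ≤ C) :
    ∃ L d M' : ℝ, 0 < L ∧ 0 < d ∧ 0 < M' ∧
      ∀ x : 𝕜, r < ‖x‖ → ‖g x‖ ≤ L * Real.log ‖x‖ ^ d * ‖x‖ ^ M' := by
  have hp' : (1 : ℝ) < p := by exact_mod_cast hp
  have hlogr : 0 < Real.log r := Real.log_pos hr
  set d := Real.logb p K
  set M' := M / (p - 1)
  set L := max C 1 / Real.log r ^ d
  have hd : 0 < d := Real.logb_pos hp' hK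
  have hL : 0 < L := by positivity
  refine ⟨L, d, M', hL, hd, div_pos hM (by linarith), fun x hx => ?_⟩
  refine norm_le_of_norm_comp_pow_le hp hr hstep (w := fun y => K * y ^ M)
    (fun y hy => mul_nonneg (by linarith) (Real.rpow_nonneg (by linarith) _))
    (fun y hy => (log_rpow_logb_mul_rpow_pow hp (by positivity) L M (hr.le.trans hy.le)).le)
    (fun y hy hyp => ?_) hx
  calc ‖g y‖ ≤ max C 1 := (hbase y hy hyp).trans (le_max_left _ _)
    _ = L * Real.log r ^ d := (div_mul_cancel₀ _ (by positivity)).symm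
    _ ≤ L * Real.log ‖y‖ ^ d := by gcongr
    _ ≤ L * Real.log ‖y‖ ^ d * ‖y‖ ^ M' :=
      le_mul_of_one_le_right
        (mul_nonneg hL.le (Real.rpow_nonneg (Real.log_nonneg (by linarith)) _))
        (Real.one_le_rpow (by linarith) (div_pos hM (by linarith)).le)

theorem stmt12_general (p n : ℕ) (hp : 2 ≤ p) (r₀ : ℝ) (hr₀ : 1 < r₀)
    (A : Matrix (Fin n) (Fin n) (RatFunc ℂ))
    (hApoles : ∀ i j (x : ℂ), r₀ / 2 < ‖x‖ → Polynomial.eval x (A i j).denom ≠ 0)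
    (g : ℂ → (Fin n → ℂ))
    (hg : DifferentiableOn ℂ g {x : ℂ | r₀ / 2 < ‖x‖})
    (heq : ∀ x : ℂ, r₀ < ‖x‖ →
      g (x ^ p) = (A.map (fun a => a.eval (RingHom.id ℂ) x)).mulVec (g x)) :
    ∃ L d M' : ℝ, 0 < L ∧ 0 < d ∧ 0 < M' ∧
      ∀ x : ℂ, r₀ < ‖x‖ → ∀ i, ‖g x i‖ ≤ L * (Real.log ‖x‖) ^ d * ‖x‖ ^ M' := by
  obtain ⟨K, m, hA⟩ := Matrix.exists_norm_map_eval_mulVec_le hr₀.le A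
    fun i j x hx => hApoles i j x (by linarith)
  have hstep : ∀ ξ : ℂ, r₀ < ‖ξ‖ →
      ‖g (ξ ^ p)‖ ≤ max K 2 * ‖ξ‖ ^ ((m + 1 : ℕ) : ℝ) * ‖g ξ‖ := fun ξ hξ => by
    rw [heq ξ hξ, Real.rpow_natCast]
    refine (hA ξ hξ.le (g ξ)).trans ?_
    gcongr
    · exact le_max_left _ _
    · linarith
    · omega
  have hannulus : IsCompact (Metric.closedBall (0 : ℂ) (r₀ ^ p) \ Metric.ball 0 r₀) :=
    (isCompact_closedBall 0 _).diff Metric.isOpen_ball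
  obtain ⟨C, hC⟩ := hannulus.exists_bound_of_continuousOn <| hg.continuousOn.mono fun x hx => by
    simp only [Set.mem_sdiff, mem_ball_zero_iff, not_lt, Set.mem_ofPred_eq] at hx ⊢
    linarith [hx.2]
  obtain ⟨L, d, M', hL, hd, hM', hbound⟩ := exists_norm_le_log_rpow_mul_rpow (by omega) hr₀
    (lt_max_of_lt_right one_lt_two) (by positivity) hstep
    fun x hx hxp => hC x (by simp [hxp, hx.le])
  exact ⟨L, d, M', hL, hd, hM', fun x hx i => (norm_le_pi_norm (g x) i).trans (hbound x hx)⟩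

/-- Let `p ≥ 2`, `A(x) ∈ GLₙ(ℂ(x))`, and `g` a (vector) function holomorphic
on `|x| > r₀/2` (for some `r₀ > 1`, where `A` has no poles either) satisfying
`g(x^p) = A(x) g(x)` for `|x| > r₀`.  Then `g` has polynomial growth at infinity: there
are `L, d, M' > 0` with `‖g(x)‖ ≤ L (log|x|)^d |x|^{M'}` for `|x| > r₀`. -/
theorem stmt12 (p n : ℕ) (hp : 2 ≤ p) (r₀ : ℝ) (hr₀ : 1 < r₀)
    (A : Matrix (Fin n) (Fin n) (RatFunc ℂ)) (hA : IsUnit A.det)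
    (hApoles : ∀ i j (x : ℂ), r₀ / 2 < ‖x‖ → Polynomial.eval x (A i j).denom ≠ 0)
    (g : ℂ → (Fin n → ℂ))
    (hg : DifferentiableOn ℂ g {x : ℂ | r₀ / 2 < ‖x‖})
    (heq : ∀ x : ℂ, r₀ < ‖x‖ →
      g (x ^ p) = (A.map (fun a => a.eval (RingHom.id ℂ) x)).mulVec (g x)) :
    ∃ L d M' : ℝ, 0 < L ∧ 0 < d ∧ 0 < M' ∧
      ∀ x : ℂ, r₀ < ‖x‖ → ∀ i, ‖g x i‖ ≤ L * (Real.log ‖x‖) ^ d * ‖x‖ ^ M' :=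
  stmt12_general p n hp r₀ hr₀ A hApoles g hg heq
end

section
/- Let h be a meromorphic function on C that is 2πi-periodic on a left half-plane {Re t < −N} where it is holomorphic. Then h is 2πi-periodic on all of C, and there exists a meromorphic function g̃ on C \ {0} with g̃(e^t) = h(t) for all t. -/
/-!
The difference `h (t + 2πi) - h t` is meromorphic on `ℂ` and vanishes on the half-plane, so by the
identity theorem it vanishes on a punctured neighbourhood of every point; by induction the same
holds for every shift `2πik`. Near any point, `log (exp t) - t` takes only finitely many values
`2πik`, hence `h ∘ log ∘ exp` agrees with `h` on punctured neighbourhoods. Thus `h ∘ log` is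
meromorphic on `ℂ \ {0}`, because `exp` has nonvanishing derivative, and equals `h` at `exp t`
whenever both sides are continuous there.
-/

open Complex Filter Topology
open scoped Real

theorem ContinuousAt.eq_of_eventuallyEq_nhdsNE {X Y : Type*} [TopologicalSpace X]
    [TopologicalSpace Y] [T2Space Y] {f g : X → Y} {x : X} [(𝓝[≠] x).NeBot]
    (hf : ContinuousAt f x) (hg : ContinuousAt g x) (hfg : f =ᶠ[𝓝[≠] x] g) : f x = g x :=
  ((hf.eventuallyEq_nhds_iff_eventuallyEq_nhdsNE hg).1 hfg).eq_of_nhds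

theorem eventuallyEq_nhdsNE_comp_add_zsmul {G β : Type*} [AddGroup G] [TopologicalSpace G]
    [IsTopologicalAddGroup G] {f : G → β} {c : G}
    (hf : ∀ x, (fun y => f (y + c)) =ᶠ[𝓝[≠] x] f) (k : ℤ) (x : G) :
    (fun y => f (y + k • c)) =ᶠ[𝓝[≠] x] f := by
  have shift (a : G) : ∀ᶠ y in 𝓝[≠] x, f (y + a + c) = f (y + a) := by
    have := hf (x + a)
    rw [← map_add_right_nhdsNE] at this
    exact this
  induction k using Int.induction_on with
  | zero => simp
  | succ k ih =>
    filter_upwards [shift ((k : ℤ) • c), ih] with y hstep hk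
    rwa [add_zsmul, one_zsmul, ← add_assoc, hstep]
  | pred k ih =>
    filter_upwards [shift ((-(k : ℤ) - 1) • c), ih] with y hstep hk
    rw [← hstep, add_assoc, ← add_one_zsmul]
    simpa using hk

theorem Meromorphic.eventuallyEq_nhdsNE_of_eventuallyEq_nhdsNE {𝕜 E : Type*} [RCLike 𝕜]
    [NormedAddCommGroup E] [NormedSpace 𝕜 E] {f g : 𝕜 → E} (hf : Meromorphic f)
    (hg : Meromorphic g) {x : 𝕜} (hfg : f =ᶠ[𝓝[≠] x] g) (y : 𝕜) : f =ᶠ[𝓝[≠] y] g := by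
  have hx : meromorphicOrderAt (f - g) x = ⊤ :=
    meromorphicOrderAt_eq_top_iff.2 (hfg.mono fun z hz => by simp [hz])
  have hy : meromorphicOrderAt (f - g) y = ⊤ := by
    by_contra hy
    exact ((hf.sub hg).exists_meromorphicOrderAt_ne_top_iff_forall.1 ⟨y, hy⟩ x) hx
  exact (meromorphicOrderAt_eq_top_iff.1 hy).mono fun z hz => sub_eq_zero.1 hz

theorem Complex.exists_int_log_exp_eq (y : ℂ) :
    ∃ n : ℤ, log (exp y) = y + n * (2 * π * I) ∧ 2 * π * |(n : ℝ)| ≤ π + |y.im| := by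
  obtain ⟨n, hn⟩ := exp_eq_exp_iff_exists_int.1 (exp_log (exp_ne_zero y))
  refine ⟨n, hn, ?_⟩
  have him : (log (exp y)).im - y.im = 2 * π * n := by simp [hn, mul_comm]
  calc 2 * π * |(n : ℝ)| = |(log (exp y)).im - y.im| := by
        rw [him, abs_mul, abs_of_pos Real.two_pi_pos]
    _ ≤ |(log (exp y)).im| + |y.im| := abs_sub _ _
    _ ≤ π + |y.im| := by
        gcongr
        exact abs_le.2 ⟨(neg_pi_lt_log_im _).le, log_im_le_pi _⟩

theorem Complex.eventuallyEq_nhdsNE_comp_log_exp {E : Type*} {f : ℂ → E}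
    (hf : ∀ k : ℤ, ∀ x, (fun y => f (y + k • (2 * π * I))) =ᶠ[𝓝[≠] x] f) (x : ℂ) :
    (fun y => f (log (exp y))) =ᶠ[𝓝[≠] x] f := by
  -- near `x`, `log (exp y) - y` is one of the finitely many `2πik` with `|k| ≤ M`
  set M : ℤ := ⌈|x.im| + 1⌉
  have hbounded : ∀ᶠ y in 𝓝[≠] x, |y.im| < |x.im| + 1 :=
    nhdsWithin_le_nhds <| (continuous_abs.comp continuous_im).continuousAt.eventually_lt
      continuousAt_const (lt_add_one _)
  have hshifts : ∀ᶠ y in 𝓝[≠] x, ∀ k ∈ Finset.Icc (-M) M, f (y + k • (2 * π * I)) = f y :=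
    (eventually_all_finset _).2 fun k _ => hf k x
  filter_upwards [hbounded, hshifts] with y hy hk
  obtain ⟨n, hn, hnle⟩ := exists_int_log_exp_eq y
  have hnM : |(n : ℝ)| ≤ |x.im| + 1 := by
    nlinarith [Real.pi_gt_three, abs_nonneg x.im, abs_nonneg (n : ℝ)]
  have hmem : n ∈ Finset.Icc (-M) M := by
    have : |n| ≤ M := by exact_mod_cast hnM.trans (Int.le_ceil _)
    rw [Finset.mem_Icc]; constructor <;> linarith [neg_abs_le n, le_abs_self n]
  rw [hn, ← zsmul_eq_mul, hk n hmem]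

theorem stmt15_general (h : ℂ → ℂ) (N : ℝ)
    (hmero : MeromorphicOn h Set.univ)
    (hper : ∀ t : ℂ, t.re < -N → h (t + 2 * Real.pi * Complex.I) = h t) :
    (∀ t : ℂ, AnalyticAt ℂ h t → AnalyticAt ℂ h (t + 2 * Real.pi * Complex.I) →
      h (t + 2 * Real.pi * Complex.I) = h t) ∧
    ∃ gt : ℂ → ℂ, MeromorphicOn gt {z : ℂ | z ≠ 0} ∧
      ∀ t : ℂ, AnalyticAt ℂ h t → AnalyticAt ℂ gt (Complex.exp t) →
        gt (Complex.exp t) = h t := by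
  have hmer : Meromorphic h := meromorphicOn_univ.1 hmero
  have hhalf : (fun t => h (t + 2 * π * I)) =ᶠ[𝓝[≠] ((-(N + 1) : ℝ) : ℂ)] h := by
    have hopen : IsOpen {t : ℂ | t.re < -N} := isOpen_lt continuous_re continuous_const
    filter_upwards [nhdsWithin_le_nhds (hopen.mem_nhds (by simp))] with t ht using hper t ht
  have hshift : ∀ x, (fun t => h (t + 2 * π * I)) =ᶠ[𝓝[≠] x] h :=
    Meromorphic.eventuallyEq_nhdsNE_of_eventuallyEq_nhdsNE
      (fun x => (hmer _).comp_analyticAt (by fun_prop)) hmer hhalf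
  have hlogexp := eventuallyEq_nhdsNE_comp_log_exp (eventuallyEq_nhdsNE_comp_add_zsmul hshift)
  refine ⟨fun t h₁ h₂ => ?_, fun z => h (log z), fun z hz => ?_, fun t h₁ h₂ => ?_⟩
  · have h₂' : AnalyticAt ℂ (fun s => h (s + 2 * π * I)) t := h₂.comp_of_eq (by fun_prop) rfl
    exact h₂'.continuousAt.eq_of_eventuallyEq_nhdsNE h₁.continuousAt (hshift t)
  · rw [← exp_log hz, ← meromorphicAt_comp_iff_of_deriv_ne_zero analyticAt_cexp (by simp)]
    exact (hmer _).congr (hlogexp _).symm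
  · exact ContinuousAt.eq_of_eventuallyEq_nhdsNE (h₂.comp analyticAt_cexp).continuousAt
      h₁.continuousAt (hlogexp t)

/-- Let `h` be meromorphic on `ℂ`, holomorphic and `2πi`-periodic on a left
half-plane `{Re t < −N}`.  Then `h` is `2πi`-periodic on all of `ℂ` (as a meromorphic
function, i.e. wherever both sides are analytic), and there is a meromorphic function `g̃`
on `ℂ \ {0}` with `g̃(e^t) = h(t)` (again away from poles). -/
theorem stmt15 (h : ℂ → ℂ) (N : ℝ)
    (hmero : MeromorphicOn h Set.univ)
    (hhol : ∀ t : ℂ, t.re < -N → AnalyticAt ℂ h t)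
    (hper : ∀ t : ℂ, t.re < -N → h (t + 2 * Real.pi * Complex.I) = h t) :
    (∀ t : ℂ, AnalyticAt ℂ h t → AnalyticAt ℂ h (t + 2 * Real.pi * Complex.I) →
      h (t + 2 * Real.pi * Complex.I) = h t) ∧
    ∃ gt : ℂ → ℂ, MeromorphicOn gt {z : ℂ | z ≠ 0} ∧
      ∀ t : ℂ, AnalyticAt ℂ h t → AnalyticAt ℂ gt (Complex.exp t) →
        gt (Complex.exp t) = h t :=
  stmt15_general h N hmero hper
end

section
/- Let p be an integer ≥ 2 and M ⊂ C a 2πi-periodic set with no finite accumulation point, contained in a vertical strip {|Re t| < D}. Then there exists δ > 0 such that the sectors {t ∈ C* : δ < arg(±t) < 2δ} are disjoint from M · p^N = {m p^k : m ∈ M, k ∈ N}. -/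
/-! A point of `M` or `-M` whose argument lies in a thin sector `0 < arg z < ε ≤ π/3` has real
part comparable to its modulus, so the strip bound confines it to a fixed disc. By discreteness
only finitely many points of `M` lie there, so `ε` can be shrunk below all their positive
arguments. Multiplying by the real `p ^ k ≥ 0` preserves the argument unless the product is `0`,
which lies in no sector. -/

open Complex Metric Set Filter
open scoped Real

lemma finite_inter_of_isBounded_of_forall_not_accPt {X : Type*} [PseudoMetricSpace X]
    [ProperSpace X] {M K : Set X} (hacc : ∀ x, ¬AccPt x (𝓟 M)) (hK : Bornology.IsBounded K) :
    (K ∩ M).Finite := by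
  obtain ⟨hclosed, hdiscrete⟩ :=
    isClosed_and_discrete_iff.2 fun x => disjoint_iff.2 (not_neBot.1 (hacc x))
  exact finite_isBounded_inter_isClosed hdiscrete hK hclosed

lemma norm_le_two_mul_re_of_abs_arg_le {z : ℂ} (h : |arg z| ≤ π / 3) : ‖z‖ ≤ 2 * z.re := by
  have hcos : 1 / 2 ≤ Real.cos (arg z) := by
    rw [← Real.cos_abs, ← Real.cos_pi_div_three]
    exact Real.cos_le_cos_of_nonneg_of_le_pi (abs_nonneg _) (by linarith [Real.pi_pos]) h
  nlinarith [norm_mul_cos_arg z, norm_nonneg z]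

lemma exists_pos_forall_arg_notMem_Ioo {N : Set ℂ} {D : ℝ}
    (hfin : ∀ K, Bornology.IsBounded K → (K ∩ N).Finite) (hre : ∀ z ∈ N, z.re ≤ D) :
    ∃ ε > 0, ∀ z ∈ N, arg z ∉ Ioo 0 ε := by
  set A := arg '' (closedBall 0 (2 * D) ∩ N) \ {0}
  have hA : IsClosed A := ((hfin _ isBounded_closedBall).image arg).sdiff.isClosed
  obtain ⟨ε₀, hε₀, hball⟩ := isOpen_iff.1 hA.isOpen_compl 0 fun h => h.2 rfl
  refine ⟨min ε₀ (π / 3), by positivity, fun z hz ⟨hpos, hlt⟩ => ?_⟩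
  have habs : |arg z| = arg z := abs_of_pos hpos
  have hnorm : ‖z‖ ≤ 2 * D :=
    (norm_le_two_mul_re_of_abs_arg_le (habs.symm ▸ hlt.le.trans (min_le_right _ _))).trans
      (by linarith [hre z hz])
  refine hball ?_ ⟨⟨z, ⟨mem_closedBall_zero_iff.2 hnorm, hz⟩, rfl⟩, hpos.ne'⟩
  rw [mem_ball, dist_zero_right, Real.norm_eq_abs, habs]
  exact hlt.trans_le (min_le_left _ _)

lemma arg_mul_natCast_pow_of_ne_zero {z : ℂ} {p k : ℕ} (h : z * p ^ k ≠ 0) :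
    arg (z * p ^ k) = arg z := by
  have hpk : ((p : ℝ) ^ k) ≠ 0 := by exact_mod_cast right_ne_zero_of_mul h
  have hcast : z * p ^ k = z * (((p : ℝ) ^ k : ℝ) : ℂ) := by push_cast; ring
  rw [hcast, arg_mul_real (lt_of_le_of_ne (by positivity) hpk.symm)]

lemma arg_mul_natCast_pow_notMem_Ioo {z : ℂ} {ε : ℝ} (hz : arg z ∉ Ioo 0 ε) (p k : ℕ) :
    arg (z * p ^ k) ∉ Ioo 0 ε := by
  intro h
  have hne : z * p ^ k ≠ 0 := fun h0 => by simp [h0] at h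
  exact hz (arg_mul_natCast_pow_of_ne_zero hne ▸ h)

theorem stmt16_general (p : ℕ) (M : Set ℂ) (D : ℝ)
    (hacc : ∀ z : ℂ, ¬ AccPt z (Filter.principal M))
    (hstrip : ∀ z ∈ M, |z.re| < D) :
    ∃ δ : ℝ, 0 < δ ∧ ∀ m ∈ M, ∀ k : ℕ,
      (¬ (δ < Complex.arg (m * (p : ℂ) ^ k) ∧ Complex.arg (m * (p : ℂ) ^ k) < 2 * δ)) ∧
      (¬ (δ < Complex.arg (-(m * (p : ℂ) ^ k)) ∧
            Complex.arg (-(m * (p : ℂ) ^ k)) < 2 * δ)) := by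
  have hfin K (hK : Bornology.IsBounded K) : (K ∩ M).Finite :=
    finite_inter_of_isBounded_of_forall_not_accPt hacc hK
  have hfin_neg K (hK : Bornology.IsBounded K) : (K ∩ -M).Finite := by
    simpa [inter_neg] using (hfin (-K) hK.neg).neg
  obtain ⟨ε₁, hε₁, hM⟩ := exists_pos_forall_arg_notMem_Ioo hfin
    fun z hz => (abs_lt.1 (hstrip z hz)).2.le
  obtain ⟨ε₂, hε₂, hnegM⟩ := exists_pos_forall_arg_notMem_Ioo (D := D) hfin_neg
    fun z hz => by linarith [(abs_lt.1 (hstrip _ (mem_neg.1 hz))).1, neg_re z]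
  have hε : min ε₁ ε₂ ≤ ε₁ ∧ min ε₁ ε₂ ≤ ε₂ := ⟨min_le_left _ _, min_le_right _ _⟩
  refine ⟨min ε₁ ε₂ / 2, by positivity, fun m hm k => ⟨fun ⟨h₁, h₂⟩ => ?_, fun ⟨h₁, h₂⟩ => ?_⟩⟩
  · exact arg_mul_natCast_pow_notMem_Ioo (hM m hm) p k ⟨by linarith, by linarith⟩
  · rw [← neg_mul] at h₁ h₂
    exact arg_mul_natCast_pow_notMem_Ioo (hnegM (-m) (neg_mem_neg.2 hm)) p k
      ⟨by linarith, by linarith⟩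

/-- Let `p ≥ 2` and `M ⊂ ℂ` be a `2πi`-periodic set with no finite
accumulation point, contained in a vertical strip `{|Re t| < D}`.  Then there is `δ > 0`
such that the sectors `{t ∈ ℂ* : δ < arg(±t) < 2δ}` are disjoint from
`M · p^ℕ = {m p^k : m ∈ M, k ∈ ℕ}`. -/
theorem stmt16 (p : ℕ) (hp : 2 ≤ p) (M : Set ℂ) (D : ℝ)
    (hper : ∀ z ∈ M, z + 2 * Real.pi * Complex.I ∈ M ∧ z - 2 * Real.pi * Complex.I ∈ M)
    (hacc : ∀ z : ℂ, ¬ AccPt z (Filter.principal M))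
    (hstrip : ∀ z ∈ M, |z.re| < D) :
    ∃ δ : ℝ, 0 < δ ∧ ∀ m ∈ M, ∀ k : ℕ,
      (¬ (δ < Complex.arg (m * (p : ℂ) ^ k) ∧ Complex.arg (m * (p : ℂ) ^ k) < 2 * δ)) ∧
      (¬ (δ < Complex.arg (-(m * (p : ℂ) ^ k)) ∧
            Complex.arg (-(m * (p : ℂ) ^ k)) < 2 * δ)) :=
  stmt16_general p M D hacc hstrip
end
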